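/- arXiv:2311.14520 — 4 statements merged into one kernel-verified Lean document; each statement's English description precedes it below -/
import Mathlib

section
/- First refined Rényi convexity bound: Let q > 1, let P be a Markov kernel on a Polish space X, and let ρ : X×X → [0,∞] be measurable with R_q(δ_x P ∥ δ_y P) ≤ ρ(x,y) for all x,y ∈ X. Then for all probability measures μ, ν on X, R_q(μP ∥ νP) ≤ inf_{γ ∈ C(μ,ν)} (1/(q−1)) log ∫ ( ∫ exp( ((q−1)/q)·ρ(x,y) ) γ_{1|2}(dx|y) )^q ν(dy), where γ_{1|2} denotes the conditional distribution of the first coordinate given the second under γ. -/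
open MeasureTheory ProbabilityTheory ENNReal Matrix

noncomputable section

namespace SCR

open scoped Classical

variable {Ω S T : Type*} [MeasurableSpace Ω] [MeasurableSpace S] [MeasurableSpace T]

/-- The Kullback--Leibler divergence `KL(μ ∥ ν)`, valued in `[0, ∞]`.  For probability
measures it agrees with `∫ log (dμ/dν) dμ` when `μ ≪ ν` (written here using the
nonnegative integrand `t ↦ t log t - t + 1` applied to the density), and is `∞` otherwise. -/
def klDiv (μ ν : Measure Ω) : ℝ≥0∞ :=
  if μ ≪ ν then
    ∫⁻ x, ENNReal.ofReal
      ((μ.rnDeriv ν x).toReal * Real.log (μ.rnDeriv ν x).toReal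
        - (μ.rnDeriv ν x).toReal + 1) ∂ν
  else ⊤

/-- Conversion `EReal → ℝ≥0∞`, sending `⊤` to `⊤` and negative values (and `⊥`) to `0`. -/
def erealToENNReal (x : EReal) : ℝ≥0∞ :=
  if x = ⊤ then ⊤ else ENNReal.ofReal x.toReal

/-- The Rényi divergence `R_q(μ ∥ ν)` of order `q`, valued in `[0, ∞]`.  For `q ≠ 1` it is
`(q-1)⁻¹ log ∫ (dμ/dλ)^q (dν/dλ)^(1-q) dλ` with common dominating measure `λ = μ + ν`;
for `q = 1` it is the Kullback--Leibler divergence. -/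
def renyiDiv (q : ℝ) (μ ν : Measure Ω) : ℝ≥0∞ :=
  if q = 1 then klDiv μ ν
  else erealToENNReal ((((q - 1)⁻¹ : ℝ) : EReal) *
    ENNReal.log (∫⁻ x, (μ.rnDeriv (μ + ν) x) ^ q * (ν.rnDeriv (μ + ν) x) ^ (1 - q) ∂(μ + ν)))

/-- `γ` is a coupling of `μ` and `ν`. -/
def IsCoupling (γ : Measure (S × T)) (μ : Measure S) (ν : Measure T) : Prop :=
  γ.fst = μ ∧ γ.snd = ν
section Aux

variable {α : Type*} [MeasurableSpace α]

lemma erealToENNReal_top : erealToENNReal (⊤ : EReal) = ⊤ := by simp [erealToENNReal]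

lemma erealToENNReal_mono {x y : EReal} (h : x ≤ y) : erealToENNReal x ≤ erealToENNReal y := by
  unfold erealToENNReal
  by_cases hy : y = ⊤
  · simp [hy]
  · have hx : x ≠ ⊤ := by rintro rfl; exact hy (top_le_iff.mp h)
    rw [if_neg hx, if_neg hy]
    rcases eq_or_ne x ⊥ with rfl | hxb
    · simp
    · exact ENNReal.ofReal_le_ofReal (EReal.toReal_le_toReal h hxb hy)

/-- The integral appearing in the Rényi divergence. -/
def rd (q : ℝ) (m n : Measure α) : ℝ≥0∞ :=
  ∫⁻ z, (m.rnDeriv (m + n) z) ^ q * (n.rnDeriv (m + n) z) ^ (1 - q) ∂(m + n)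

lemma renyiDiv_def' {q : ℝ} (hq : q ≠ 1) (m n : Measure α) :
    renyiDiv q m n
      = erealToENNReal ((((q - 1)⁻¹ : ℝ) : EReal) * ENNReal.log (rd q m n)) := by
  rw [renyiDiv, if_neg hq]; rfl

lemma rd_eq_top_of_not_ac {q : ℝ} (hq : 1 < q) {m n : Measure α} [IsFiniteMeasure m]
    [IsFiniteMeasure n] (h : ¬ m ≪ n) : rd q m n = ⊤ := by
  have hmΛ : m ≪ m + n := (Measure.le_add_right le_rfl).absolutelyContinuous
  have hnΛ : n ≪ m + n := (Measure.le_add_left le_rfl).absolutelyContinuous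
  have hex : ∃ s, n s = 0 ∧ m s ≠ 0 := by
    by_contra hc
    push_neg at hc
    exact h (Measure.AbsolutelyContinuous.mk fun s _ hs => hc s hs)
  obtain ⟨s, hns, hms⟩ := hex
  set t := toMeasurable n s with htdef
  have ht : MeasurableSet t := measurableSet_toMeasurable n s
  have hnt : n t = 0 := by rw [htdef, measure_toMeasurable]; exact hns
  have hmt : m t ≠ 0 := fun h0 => hms (measure_mono_null (subset_toMeasurable n s) h0)
  set a := m.rnDeriv (m + n) with ha
  set b := n.rnDeriv (m + n) with hb
  have hbt : ∀ᵐ z ∂((m + n).restrict t), b z = 0 := by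
    have h0 : ∫⁻ z in t, b z ∂(m + n) = 0 := by
      rw [Measure.setLIntegral_rnDeriv hnΛ t]; exact hnt
    exact (lintegral_eq_zero_iff (Measure.measurable_rnDeriv n (m + n))).mp h0
  have hat : ∫⁻ z in t, a z ∂(m + n) = m t := Measure.setLIntegral_rnDeriv hmΛ t
  set u := {z | a z ≠ 0} with hu
  have humeas : MeasurableSet u :=
    (Measure.measurable_rnDeriv m (m + n)) (measurableSet_singleton 0) |>.compl
  have hpos : ((m + n).restrict t) u ≠ 0 := by
    intro h0
    apply hmt
    rw [← hat]
    have hae : ∀ᵐ z ∂((m + n).restrict t), a z = 0 := by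
      rw [ae_iff]
      exact h0
    calc ∫⁻ z in t, a z ∂(m + n) = ∫⁻ z in t, 0 ∂(m + n) := lintegral_congr_ae hae
    _ = 0 := lintegral_zero
  have hind : ∫⁻ z in t, u.indicator (fun _ => (⊤ : ℝ≥0∞)) z ∂(m + n) = ⊤ := by
    rw [lintegral_indicator humeas, setLIntegral_const]
    exact ENNReal.top_mul hpos
  have hle : ∫⁻ z in t, u.indicator (fun _ => (⊤ : ℝ≥0∞)) z ∂(m + n)
      ≤ ∫⁻ z in t, a z ^ q * b z ^ (1 - q) ∂(m + n) := by
    refine lintegral_mono_ae ?_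
    filter_upwards [hbt] with z hz
    by_cases hzu : z ∈ u
    · rw [Set.indicator_of_mem hzu]
      have ha0 : a z ^ q ≠ 0 := by
        simp only [ne_eq, ENNReal.rpow_eq_zero_iff_of_pos (show (0:ℝ) < q by linarith)]
        exact hzu
      rw [hz, ENNReal.zero_rpow_of_neg (by linarith), ENNReal.mul_top ha0]
    · rw [Set.indicator_of_notMem hzu]
      exact zero_le
  refine top_le_iff.mp ?_
  calc (⊤ : ℝ≥0∞) = ∫⁻ z in t, u.indicator (fun _ => (⊤ : ℝ≥0∞)) z ∂(m + n) := hind.symm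
  _ ≤ ∫⁻ z in t, a z ^ q * b z ^ (1 - q) ∂(m + n) := hle
  _ ≤ rd q m n := setLIntegral_le_lintegral _ _

lemma renyiDiv_eq_top_of_not_ac {q : ℝ} (hq : 1 < q) {m n : Measure α} [IsFiniteMeasure m]
    [IsFiniteMeasure n] (h : ¬ m ≪ n) : renyiDiv q m n = ⊤ := by
  rw [renyiDiv_def' hq.ne' m n, rd_eq_top_of_not_ac hq h, ENNReal.log_top,
    EReal.coe_mul_top_of_pos (inv_pos.mpr (by linarith)), erealToENNReal_top]

lemma rd_eq_of_ac {q : ℝ} (hq : 1 < q) {m n : Measure α} [IsFiniteMeasure m] [IsFiniteMeasure n]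
    (h : m ≪ n) : rd q m n = ∫⁻ z, (m.rnDeriv n z) ^ q ∂n := by
  have hnΛ : n ≪ m + n := (Measure.le_add_left le_rfl).absolutelyContinuous
  rw [← MeasureTheory.lintegral_rnDeriv_mul hnΛ
    ((Measure.measurable_rnDeriv m n).pow_const q).aemeasurable]
  refine lintegral_congr_ae ?_
  filter_upwards [Measure.rnDeriv_mul_rnDeriv h (κ := m + n), Measure.rnDeriv_lt_top n (m + n)]
    with z hz1 hz2
  have hz1' : m.rnDeriv n z * n.rnDeriv (m + n) z = m.rnDeriv (m + n) z := hz1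
  set g := m.rnDeriv n z
  set b := n.rnDeriv (m + n) z
  rw [← hz1']
  rcases eq_or_ne b 0 with hb0 | hb0
  · simp [hb0, ENNReal.zero_rpow_of_pos (show (0:ℝ) < q by linarith)]
  · rw [ENNReal.mul_rpow_of_nonneg _ _ (by linarith : (0:ℝ) ≤ q), mul_assoc,
      ← ENNReal.rpow_add q (1 - q) hb0 hz2.ne]
    norm_num
    rw [mul_comm]

lemma rd_rpow_inv_le_exp {q : ℝ} (hq : 1 < q) {m n : Measure α} [IsFiniteMeasure m]
    [IsFiniteMeasure n] {r : ℝ≥0∞} (hr : r ≠ ⊤) (hle : renyiDiv q m n ≤ r) :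
    (rd q m n) ^ q⁻¹ ≤ EReal.exp ((((q - 1) / q : ℝ) : EReal) * (r : EReal)) := by
  have hq0 : (0:ℝ) < q := by linarith
  have hq1 : (0:ℝ) < q - 1 := by linarith
  have hrE : (r : EReal) = ((r.toReal : ℝ) : EReal) := by
    rw [← EReal.coe_toReal (x := (r : EReal)) (by simpa using hr) (by simp)]
    rw [EReal.toReal_coe_ennreal]
  have hexp : EReal.exp ((((q - 1) / q : ℝ) : EReal) * (r : EReal))
      = ENNReal.ofReal (Real.exp ((q - 1) / q * r.toReal)) := by
    rw [hrE, ← EReal.coe_mul, EReal.exp_coe]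
  have hone_le : (1 : ℝ≥0∞) ≤ EReal.exp ((((q - 1) / q : ℝ) : EReal) * (r : EReal)) := by
    rw [hexp]
    refine ENNReal.one_le_ofReal.mpr (Real.one_le_exp ?_)
    have : (0:ℝ) ≤ r.toReal := ENNReal.toReal_nonneg
    positivity
  rcases eq_or_ne (rd q m n) 0 with hF0 | hF0
  · rw [hF0, ENNReal.zero_rpow_of_pos (by positivity)]
    exact zero_le
  rcases eq_or_ne (rd q m n) ⊤ with hFt | hFt
  · exfalso
    apply hr
    rw [renyiDiv_def' hq.ne' m n, hFt, ENNReal.log_top,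
      EReal.coe_mul_top_of_pos (inv_pos.mpr hq1), erealToENNReal_top] at hle
    exact top_le_iff.mp hle
  have hLb : ENNReal.log (rd q m n) ≠ ⊥ := by simp [hF0]
  have hLt : ENNReal.log (rd q m n) ≠ ⊤ := by simp [hFt]
  set L := ENNReal.log (rd q m n) with hLdef
  rw [renyiDiv_def' hq.ne' m n] at hle
  by_cases hL0 : L ≤ 0
  · have hF1 : rd q m n ≤ 1 := by
      rw [← ENNReal.log_le_zero_iff]
      exact hL0
    calc (rd q m n) ^ q⁻¹ ≤ (1 : ℝ≥0∞) ^ q⁻¹ := ENNReal.rpow_le_rpow hF1 (by positivity)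
    _ = 1 := ENNReal.one_rpow _
    _ ≤ _ := hone_le
  · push_neg at hL0
    have hvreal : (((q - 1)⁻¹ : ℝ) : EReal) * L = (((q - 1)⁻¹ * L.toReal : ℝ) : EReal) := by
      nth_rw 1 [← EReal.coe_toReal hLt hLb]
      rw [← EReal.coe_mul]
    rw [hvreal] at hle
    have herval : erealToENNReal (((q - 1)⁻¹ * L.toReal : ℝ) : EReal)
        = ENNReal.ofReal ((q - 1)⁻¹ * L.toReal) := by
      rw [erealToENNReal, if_neg (EReal.coe_ne_top _), EReal.toReal_coe]
    rw [herval] at hle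
    have h1 : (q - 1)⁻¹ * L.toReal ≤ r.toReal := (ENNReal.ofReal_le_iff_le_toReal hr).mp hle
    have hLr : L.toReal ≤ (q - 1) * r.toReal := by
      have : (q - 1) * ((q - 1)⁻¹ * L.toReal) ≤ (q - 1) * r.toReal :=
        mul_le_mul_of_nonneg_left h1 (by linarith)
      calc L.toReal = (q - 1) * ((q - 1)⁻¹ * L.toReal) := by field_simp
      _ ≤ (q - 1) * r.toReal := this
    have hFle : rd q m n ≤ ENNReal.ofReal (Real.exp ((q - 1) * r.toReal)) := by
      have hFL : rd q m n = EReal.exp L := (ENNReal.exp_log _).symm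
      rw [hFL, ← EReal.exp_coe]
      refine EReal.exp_monotone ?_
      rw [← EReal.coe_toReal hLt hLb]
      exact EReal.coe_le_coe_iff.mpr hLr
    calc (rd q m n) ^ q⁻¹
        ≤ (ENNReal.ofReal (Real.exp ((q - 1) * r.toReal))) ^ q⁻¹ :=
          ENNReal.rpow_le_rpow hFle (by positivity)
    _ = ENNReal.ofReal ((Real.exp ((q - 1) * r.toReal)) ^ (q⁻¹ : ℝ)) :=
          ENNReal.ofReal_rpow_of_pos (Real.exp_pos _)
    _ = ENNReal.ofReal (Real.exp ((q - 1) * r.toReal * q⁻¹)) := by rw [← Real.exp_mul]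
    _ = _ := by rw [hexp]; ring_nf

lemma isProbabilityMeasure_bind {β : Type*} [MeasurableSpace β] (ν : Measure α)
    [IsProbabilityMeasure ν] (K : Kernel α β) [IsMarkovKernel K] :
    IsProbabilityMeasure (ν.bind (fun y => K y)) := by
  constructor
  rw [Measure.bind_apply MeasurableSet.univ K.measurable.aemeasurable]
  simp

lemma snd_compProd_eq_bind {β : Type*} [MeasurableSpace β] (ν : Measure α) [SFinite ν]
    (K : Kernel α β) [IsSFiniteKernel K] : (ν ⊗ₘ K).snd = ν.bind (fun y => K y) := by
  ext s hs
  rw [Measure.snd_apply hs, Measure.compProd_apply (measurable_snd hs),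
    Measure.bind_apply hs K.measurable.aemeasurable]
  rfl

lemma pt_claim1 {q : ℝ} (hq : 1 < q) {a b : ℝ≥0∞} (hbt : b ≠ ⊤) (n : ℕ) :
    (min (a ^ (q - 1) * b ^ (1 - q)) (n : ℝ≥0∞)) ^ (q / (q - 1)) * b
      ≤ (min (a ^ (q - 1) * b ^ (1 - q)) (n : ℝ≥0∞)) * a := by
  have hq1 : (0:ℝ) < q - 1 := by linarith
  have hs' : q / (q - 1) - 1 = 1 / (q - 1) := by field_simp; ring
  have hs0 : (0:ℝ) < q / (q - 1) - 1 := by rw [hs']; positivity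
  have hq'0 : (0:ℝ) < q / (q - 1) := by positivity
  set h := min (a ^ (q - 1) * b ^ (1 - q)) (n : ℝ≥0∞) with hh
  have hht : h ≠ ⊤ := ne_top_of_le_ne_top (ENNReal.natCast_ne_top n) (min_le_right _ _)
  rcases eq_or_ne h 0 with hh0 | hh0
  · rw [hh0, ENNReal.zero_rpow_of_pos hq'0, zero_mul, zero_mul]
  have key : h ^ (q / (q - 1) - 1) * b ≤ a := by
    rcases eq_or_ne b 0 with hb0 | hb0
    · rw [hb0, mul_zero]; exact zero_le
    rcases eq_or_ne a 0 with ha0 | ha0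
    · exfalso
      apply hh0
      rw [hh, ha0, ENNReal.zero_rpow_of_pos hq1, zero_mul]
      simp
    rcases eq_or_ne a ⊤ with hat | hat
    · rw [hat]; exact le_top
    have hcalc : (a ^ (q - 1) * b ^ (1 - q)) ^ (q / (q - 1) - 1) = a * b⁻¹ := by
      rw [ENNReal.mul_rpow_of_nonneg _ _ hs0.le, ← ENNReal.rpow_mul, ← ENNReal.rpow_mul,
        show (q - 1) * (q / (q - 1) - 1) = 1 by
          have h1 : q - 1 ≠ 0 := hq1.ne'; field_simp; ring,
        show (1 - q) * (q / (q - 1) - 1) = -1 by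
          have h1 : q - 1 ≠ 0 := hq1.ne'; rw [hs']; field_simp; try ring,
        ENNReal.rpow_one, ENNReal.rpow_neg_one]
    have hle : h ^ (q / (q - 1) - 1) ≤ a * b⁻¹ := by
      rw [← hcalc]
      exact ENNReal.rpow_le_rpow (min_le_left _ _) hs0.le
    calc h ^ (q / (q - 1) - 1) * b ≤ a * b⁻¹ * b := mul_le_mul_left hle b
    _ = a := by rw [mul_assoc, ENNReal.inv_mul_cancel hb0 hbt, mul_one]
  have hsplit : h ^ (q / (q - 1)) = h ^ (1:ℝ) * h ^ (q / (q - 1) - 1) := by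
    rw [← ENNReal.rpow_add 1 (q / (q - 1) - 1) hh0 hht]
    norm_num
  calc h ^ (q / (q - 1)) * b = h ^ (1:ℝ) * (h ^ (q / (q - 1) - 1) * b) := by
        rw [hsplit, mul_assoc]
  _ ≤ h ^ (1:ℝ) * a := mul_le_mul_right key _
  _ = h * a := by rw [ENNReal.rpow_one]

lemma pt_claim2 {q : ℝ} (hq : 1 < q) {a b : ℝ≥0∞} (hat : a ≠ ⊤) (hbt : b ≠ ⊤)
    (hab : b = 0 → a = 0) :
    (⨆ n : ℕ, (min (a ^ (q - 1) * b ^ (1 - q)) (n : ℝ≥0∞)) ^ (q / (q - 1)) * b)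
      = a ^ q * b ^ (1 - q) := by
  have hq1 : (0:ℝ) < q - 1 := by linarith
  have hq'0 : (0:ℝ) < q / (q - 1) := by positivity
  rcases eq_or_ne b 0 with hb0 | hb0
  · have ha0 : a = 0 := hab hb0
    subst hb0; subst ha0
    simp [ENNReal.zero_rpow_of_pos hq1, ENNReal.zero_rpow_of_pos (show (0:ℝ) < q by linarith)]
  rcases eq_or_ne a 0 with ha0 | ha0
  · subst ha0
    have hc0 : (0:ℝ≥0∞) ^ (q - 1) * b ^ (1 - q) = 0 := by
      rw [ENNReal.zero_rpow_of_pos hq1, zero_mul]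
    simp [hc0, ENNReal.zero_rpow_of_pos hq'0, ENNReal.zero_rpow_of_pos (show (0:ℝ) < q by linarith)]
  -- now a ≠ 0, b ≠ 0, both ≠ ⊤
  have h1 : a ^ (q - 1) ≠ ⊤ := ENNReal.rpow_ne_top_of_nonneg hq1.le hat
  have h2 : b ^ (1 - q) ≠ ⊤ := by
    intro hc
    rw [ENNReal.rpow_eq_top_iff] at hc
    rcases hc with ⟨hb0', _⟩ | ⟨hbt', _⟩
    · exact hb0 hb0'
    · exact hbt hbt'
  have hct : a ^ (q - 1) * b ^ (1 - q) ≠ ⊤ := ENNReal.mul_ne_top h1 h2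
  obtain ⟨n0, hn0⟩ := ENNReal.exists_nat_gt hct
  have hmin : min (a ^ (q - 1) * b ^ (1 - q)) (n0 : ℝ≥0∞) = a ^ (q - 1) * b ^ (1 - q) :=
    min_eq_left hn0.le
  have hsup : (⨆ n : ℕ, (min (a ^ (q - 1) * b ^ (1 - q)) (n : ℝ≥0∞)) ^ (q / (q - 1)) * b)
      = (a ^ (q - 1) * b ^ (1 - q)) ^ (q / (q - 1)) * b := by
    refine le_antisymm (iSup_le fun n => ?_) (le_iSup_of_le n0 (by rw [hmin]))
    exact mul_le_mul_left (ENNReal.rpow_le_rpow (min_le_left _ _) hq'0.le) b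
  rw [hsup, ENNReal.mul_rpow_of_nonneg _ _ hq'0.le, ← ENNReal.rpow_mul, ← ENNReal.rpow_mul,
    show (q - 1) * (q / (q - 1)) = q by
      have h3 : q - 1 ≠ 0 := hq1.ne'; field_simp,
    show (1 - q) * (q / (q - 1)) = -q by
      have h3 : q - 1 ≠ 0 := hq1.ne'; field_simp; try ring,
    mul_assoc]
  congr 1
  nth_rw 2 [← ENNReal.rpow_one b]
  rw [← ENNReal.rpow_add _ _ hb0 hbt]
  ring_nf

lemma le_of_le_rpow_mul {S W : ℝ≥0∞} {q : ℝ} (hq : 1 < q) (hS : S ≠ ⊤)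
    (h : S ≤ W ^ q⁻¹ * S ^ (1 - q⁻¹)) : S ≤ W := by
  have hq0 : (0:ℝ) < q := by linarith
  rcases eq_or_ne S 0 with rfl | hS0
  · exact zero_le
  have h1 : S ^ (1 - q⁻¹) ≠ 0 := by simp [ENNReal.rpow_eq_zero_iff, hS0, hS]
  have h2 : S ^ (1 - q⁻¹) ≠ ⊤ := by simp [ENNReal.rpow_eq_top_iff, hS0, hS]
  have hsplit : S ^ (q⁻¹) * S ^ (1 - q⁻¹) = S := by
    rw [← ENNReal.rpow_add _ _ hS0 hS]
    norm_num
  have key : S ^ q⁻¹ * S ^ (1 - q⁻¹) ≤ W ^ q⁻¹ * S ^ (1 - q⁻¹) := by rw [hsplit]; exact h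
  have key2 : S ^ q⁻¹ ≤ W ^ q⁻¹ := (ENNReal.mul_le_mul_iff_left h1 h2).mp key
  calc S = (S ^ q⁻¹) ^ q := (ENNReal.rpow_inv_rpow hq0.ne' S).symm
  _ ≤ (W ^ q⁻¹) ^ q := ENNReal.rpow_le_rpow key2 hq0.le
  _ = W := ENNReal.rpow_inv_rpow hq0.ne' W

lemma exp_top_of_rho_top {q : ℝ} (hq : 1 < q) {w : ℝ≥0∞} (hw : w = ⊤) :
    EReal.exp ((((q - 1) / q : ℝ) : EReal) * (w : EReal)) = ⊤ := by
  rw [hw, EReal.coe_ennreal_top, EReal.coe_mul_top_of_pos (div_pos (by linarith) (by linarith))]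
  rfl

lemma core_bound {q : ℝ} (hq : 1 < q) (P : Kernel α α) [IsMarkovKernel P]
    (ρ : α → α → ℝ≥0∞) (hρ : Measurable (Function.uncurry ρ))
    (hone : ∀ x y, renyiDiv q (P x) (P y) ≤ ρ x y)
    (ν : Measure α) [IsProbabilityMeasure ν] (κ : Kernel α α) [IsMarkovKernel κ] :
    rd q ((ν.bind fun y => κ y).bind fun x => P x) (ν.bind fun x => P x)
      ≤ ∫⁻ y, (∫⁻ x, EReal.exp ((((q - 1) / q : ℝ) : EReal) * (ρ x y : EReal)) ∂(κ y)) ^ q ∂ν := by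
  have hq0 : (0:ℝ) < q := by linarith
  have hq1 : (0:ℝ) < q - 1 := by linarith
  set q' : ℝ := q / (q - 1) with hq'def
  have hq'1 : 1 < q' := by rw [hq'def, lt_div_iff₀ hq1]; linarith
  have hq'0 : (0:ℝ) < q' := by linarith
  have hconj : q.HolderConjugate q' := Real.HolderConjugate.conjExponent hq
  have hqq' : q'⁻¹ = 1 - q⁻¹ := by
    rw [hq'def]
    field_simp
  set e : α → α → ℝ≥0∞ :=
    fun x y => EReal.exp ((((q - 1) / q : ℝ) : EReal) * (ρ x y : EReal)) with hedef
  set M : Measure α := (ν.bind fun y => κ y).bind fun x => P x with hMdef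
  set N : Measure α := ν.bind fun x => P x with hNdef
  haveI hNP : IsProbabilityMeasure N := isProbabilityMeasure_bind ν P
  haveI hPM : IsProbabilityMeasure (ν.bind fun y => κ y) := isProbabilityMeasure_bind ν κ
  haveI hMP : IsProbabilityMeasure M := isProbabilityMeasure_bind _ P
  set T : ℝ≥0∞ := ∫⁻ y, (∫⁻ x, e x y ∂(κ y)) ^ q ∂ν with hTdef
  show rd q M N ≤ T
  rcases eq_or_ne T ⊤ with hT | hT
  · rw [hT]; exact le_top
  -- measurability of e
  have hemeas : Measurable (Function.uncurry e) := by
    have h1 : Function.uncurry e = fun p : α × α =>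
        EReal.exp ((((q - 1) / q : ℝ) : EReal) * ((Function.uncurry ρ p : ℝ≥0∞) : EReal)) := rfl
    have h2 : ∀ p : α × α, EReal.exp ((((q - 1) / q : ℝ) : EReal) * ((Function.uncurry ρ p : ℝ≥0∞) : EReal))
        = (EReal.exp ((Function.uncurry ρ p : ℝ≥0∞) : EReal)) ^ ((q - 1) / q : ℝ) := by
      intro p
      rw [mul_comm, EReal.exp_mul]
    rw [h1]
    simp_rw [h2]
    exact (EReal.measurable_exp.comp (measurable_coe_ennreal_ereal.comp hρ)).pow_const _
  have hemeas1 : ∀ y, Measurable fun x => e x y := by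
    intro y
    exact hemeas.comp (measurable_id.prodMk measurable_const)
  -- pointwise: e x y = ⊤ when P x is not absolutely continuous wrt P y
  have he_top : ∀ x y, ¬ P x ≪ P y → e x y = ⊤ := by
    intro x y hnac
    have h1 : renyiDiv q (P x) (P y) = ⊤ := renyiDiv_eq_top_of_not_ac hq hnac
    have h2 : ρ x y = ⊤ := top_le_iff.mp (h1 ▸ hone x y)
    exact exp_top_of_rho_top hq h2
  -- duality upper bound
  have hdual : ∀ h : α → ℝ≥0∞, Measurable h → (∫⁻ z, h z ^ q' ∂N) ≤ 1 →
      ∫⁻ z, h z ∂M ≤ T ^ q⁻¹ := by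
    intro h hh hint
    set H : α → ℝ≥0∞ := fun y => (∫⁻ z, h z ^ q' ∂(P y)) ^ (q'⁻¹) with hHdef
    have hHinner : Measurable fun y => ∫⁻ z, h z ^ q' ∂(P y) :=
      Measurable.lintegral_kernel_prod_right ((hh.pow_const q').comp measurable_snd)
    have hHmeas : Measurable H := hHinner.pow_const _
    have hmain : ∀ δ : ℝ≥0∞, δ ≠ 0 → δ ≠ ⊤ → ∫⁻ z, h z ∂M ≤ (1 + δ) * T ^ q⁻¹ := by
      intro δ hδ0 hδt
      have hpt : ∀ x y, ∫⁻ z, h z ∂(P x) ≤ (H y + δ) * e x y := by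
        intro x y
        rcases eq_or_ne (e x y) ⊤ with het | het
        · rw [het, ENNReal.mul_top (by simp [hδ0])]
          exact le_top
        have hac : P x ≪ P y := by
          by_contra hnac
          exact het (he_top x y hnac)
        have hρt : ρ x y ≠ ⊤ := by
          intro hc
          exact het (exp_top_of_rho_top hq hc)
        have hrd : (rd q (P x) (P y)) ^ q⁻¹ ≤ e x y := rd_rpow_inv_le_exp hq hρt (hone x y)
        have heq : ∫⁻ z, h z ∂(P x) = ∫⁻ z, ((P x).rnDeriv (P y) * h) z ∂(P y) :=
          (MeasureTheory.lintegral_rnDeriv_mul hac hh.aemeasurable).symm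
        rw [heq]
        calc ∫⁻ z, ((P x).rnDeriv (P y) * h) z ∂(P y)
            ≤ (∫⁻ z, (P x).rnDeriv (P y) z ^ q ∂(P y)) ^ (1/q) *
              (∫⁻ z, h z ^ q' ∂(P y)) ^ (1/q') :=
              ENNReal.lintegral_mul_le_Lp_mul_Lq (P y) hconj
                (Measure.measurable_rnDeriv _ _).aemeasurable hh.aemeasurable
        _ = (rd q (P x) (P y)) ^ q⁻¹ * H y := by
              rw [← rd_eq_of_ac hq hac, one_div, one_div]
        _ ≤ e x y * H y := mul_le_mul_left hrd _
        _ ≤ e x y * (H y + δ) := mul_le_mul_right le_self_add _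
        _ = (H y + δ) * e x y := mul_comm _ _
      have hPint : Measurable fun w => ∫⁻ z, h z ∂(P w) :=
        Measurable.lintegral_kernel_prod_right (hh.comp measurable_snd)
      have hbind : ∫⁻ z, h z ∂M = ∫⁻ y, ∫⁻ x, (∫⁻ z, h z ∂(P x)) ∂(κ y) ∂ν := by
        rw [hMdef, Measure.lintegral_bind P.measurable.aemeasurable hh.aemeasurable, Measure.lintegral_bind κ.measurable.aemeasurable hPint.aemeasurable]
      have hEmeas : Measurable fun y => ∫⁻ x, e x y ∂(κ y) := by
        have : Measurable (Function.uncurry fun y x => e x y) :=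
          hemeas.comp measurable_swap
        exact Measurable.lintegral_kernel_prod_right this
      calc ∫⁻ z, h z ∂M = ∫⁻ y, ∫⁻ x, (∫⁻ z, h z ∂(P x)) ∂(κ y) ∂ν := hbind
      _ ≤ ∫⁻ y, (H y + δ) * (∫⁻ x, e x y ∂(κ y)) ∂ν := by
            refine lintegral_mono fun y => ?_
            calc ∫⁻ x, (∫⁻ z, h z ∂(P x)) ∂(κ y)
                ≤ ∫⁻ x, (H y + δ) * e x y ∂(κ y) := lintegral_mono fun x => hpt x y
            _ = (H y + δ) * ∫⁻ x, e x y ∂(κ y) := lintegral_const_mul _ (hemeas1 y)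
      _ = ∫⁻ y, ((fun y => H y + δ) * fun y => ∫⁻ x, e x y ∂(κ y)) y ∂ν := rfl
      _ ≤ (∫⁻ y, (H y + δ) ^ q' ∂ν) ^ (1/q') * (∫⁻ y, (∫⁻ x, e x y ∂(κ y)) ^ q ∂ν) ^ (1/q) :=
            ENNReal.lintegral_mul_le_Lp_mul_Lq ν hconj.symm
              (hHmeas.add_const δ).aemeasurable hEmeas.aemeasurable
      _ ≤ (1 + δ) * T ^ q⁻¹ := by
            rw [hTdef, one_div, one_div]
            refine mul_le_mul_left ?_ _
            have hmink : (∫⁻ y, (H y + δ) ^ q' ∂ν) ^ (q'⁻¹)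
                ≤ (∫⁻ y, H y ^ q' ∂ν) ^ (q'⁻¹) + (∫⁻ y, δ ^ q' ∂ν) ^ (q'⁻¹) := by
              have := ENNReal.lintegral_Lp_add_le hHmeas.aemeasurable
                (aemeasurable_const (b := δ)) hq'1.le (μ := ν)
              rw [one_div] at this
              exact this
            have hHint : ∫⁻ y, H y ^ q' ∂ν ≤ 1 := by
              have hHy : ∀ y, H y ^ q' = ∫⁻ z, h z ^ q' ∂(P y) := fun y =>
                ENNReal.rpow_inv_rpow hq'0.ne' _
              calc ∫⁻ y, H y ^ q' ∂ν = ∫⁻ y, ∫⁻ z, h z ^ q' ∂(P y) ∂ν :=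
                    lintegral_congr fun y => hHy y
              _ = ∫⁻ z, h z ^ q' ∂N := (Measure.lintegral_bind P.measurable.aemeasurable (hh.pow_const q').aemeasurable).symm
              _ ≤ 1 := hint
            have hδint : (∫⁻ _, δ ^ q' ∂ν) ^ (q'⁻¹) = δ := by
              rw [lintegral_const, measure_univ, mul_one, ENNReal.rpow_rpow_inv hq'0.ne']
            calc (∫⁻ y, (H y + δ) ^ q' ∂ν) ^ (q'⁻¹)
                ≤ (∫⁻ y, H y ^ q' ∂ν) ^ (q'⁻¹) + (∫⁻ _, δ ^ q' ∂ν) ^ (q'⁻¹) := hmink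
            _ = (∫⁻ y, H y ^ q' ∂ν) ^ (q'⁻¹) + δ := by rw [hδint]
            _ ≤ (1 : ℝ≥0∞) ^ (q'⁻¹) + δ :=
                  add_le_add_left (ENNReal.rpow_le_rpow hHint (by positivity)) δ
            _ = 1 + δ := by rw [ENNReal.one_rpow]
    refine ENNReal.le_of_forall_pos_le_add fun ε hε _ => ?_
    have hTq : T ^ q⁻¹ ≠ ⊤ := by
      intro hc
      exact hT (ENNReal.rpow_eq_top_of_nonneg _ (by positivity) hc)
    rcases eq_or_ne (T ^ q⁻¹) 0 with hT0 | hT0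
    · have h2 := hmain 1 one_ne_zero one_ne_top
      rw [hT0, mul_zero] at h2
      exact h2.trans zero_le
    · set δ := (ε : ℝ≥0∞) / T ^ q⁻¹ with hδdef
      have hδ0 : δ ≠ 0 := by
        simp only [hδdef, ne_eq, ENNReal.div_eq_zero_iff, not_or]
        exact ⟨by exact_mod_cast hε.ne', hTq⟩
      have hδt : δ ≠ ⊤ := by
        simp only [hδdef, ne_eq, ENNReal.div_eq_top, not_or, not_and_or]
        exact ⟨Or.inr hT0, Or.inl ENNReal.coe_ne_top⟩
      have h2 := hmain δ hδ0 hδt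
      calc ∫⁻ z, h z ∂M ≤ (1 + δ) * T ^ q⁻¹ := h2
      _ = T ^ q⁻¹ + δ * T ^ q⁻¹ := by rw [add_mul, one_mul]
      _ = T ^ q⁻¹ + ε := by rw [hδdef, ENNReal.div_mul_cancel hT0 hTq]
  -- now the duality argument
  set Λ : Measure α := M + N with hΛdef
  have hMΛ : M ≪ Λ := (Measure.le_add_right le_rfl).absolutelyContinuous
  have hNΛ : N ≪ Λ := (Measure.le_add_left le_rfl).absolutelyContinuous
  set a : α → ℝ≥0∞ := M.rnDeriv Λ with hadef
  set b : α → ℝ≥0∞ := N.rnDeriv Λ with hbdef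
  have hameas : Measurable a := Measure.measurable_rnDeriv M Λ
  have hbmeas : Measurable b := Measure.measurable_rnDeriv N Λ
  by_cases hMN : M ≪ N
  · -- absolutely continuous case
    have hb0a : ∀ᵐ z ∂Λ, b z = 0 → a z = 0 := by
      have hbset : MeasurableSet {z | b z = 0} := hbmeas (measurableSet_singleton 0)
      have hNb : N {z | b z = 0} = 0 := by
        rw [← Measure.setLIntegral_rnDeriv hNΛ]
        calc ∫⁻ z in {z | b z = 0}, b z ∂Λ = ∫⁻ _ in {z | b z = 0}, 0 ∂Λ :=
              setLIntegral_congr_fun hbset (fun z hz => hz)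
        _ = 0 := lintegral_zero
      have hMb : M {z | b z = 0} = 0 := hMN hNb
      have hMb' : ∫⁻ z in {z | b z = 0}, a z ∂Λ = 0 := by
        rw [Measure.setLIntegral_rnDeriv hMΛ]
        exact hMb
      have := (lintegral_eq_zero_iff hameas).mp hMb'
      exact (ae_restrict_iff' hbset).mp this
    have hrd_eq : rd q M N
        = ⨆ n : ℕ, ∫⁻ z, (min (a z ^ (q-1) * b z ^ (1-q)) (n : ℝ≥0∞)) ^ q' * b z ∂Λ := by
      have hmeas_n : ∀ n : ℕ, Measurable fun z =>
          (min (a z ^ (q-1) * b z ^ (1-q)) (n : ℝ≥0∞)) ^ q' * b z := by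
        intro n
        exact ((((hameas.pow_const _).mul (hbmeas.pow_const _)).min measurable_const).pow_const
          _).mul hbmeas
      have hmono : Monotone fun (n : ℕ) => fun z =>
          (min (a z ^ (q-1) * b z ^ (1-q)) (n : ℝ≥0∞)) ^ q' * b z := by
        intro i j hij
        intro z
        dsimp only
        gcongr

      rw [← lintegral_iSup hmeas_n hmono]
      refine lintegral_congr_ae ?_
      filter_upwards [Measure.rnDeriv_lt_top M Λ, Measure.rnDeriv_lt_top N Λ, hb0a]
        with z haz hbz hab
      exact (pt_claim2 hq haz.ne hbz.ne hab).symm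
    rw [hrd_eq]
    refine iSup_le fun n => ?_
    set hn : α → ℝ≥0∞ := fun z => min (a z ^ (q-1) * b z ^ (1-q)) (n : ℝ≥0∞) with hndef
    have hnmeas : Measurable hn :=
      ((hameas.pow_const _).mul (hbmeas.pow_const _)).min measurable_const
    set S : ℝ≥0∞ := ∫⁻ z, hn z ^ q' * b z ∂Λ with hSdef
    have hSfin : S ≠ ⊤ := by
      refine ne_top_of_le_ne_top
        (ENNReal.rpow_ne_top_of_nonneg hq'0.le (ENNReal.natCast_ne_top n)) ?_
      calc S ≤ ∫⁻ z, (n : ℝ≥0∞) ^ q' * b z ∂Λ := by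
            rw [hSdef]
            refine lintegral_mono fun z => ?_
            exact mul_le_mul_left (ENNReal.rpow_le_rpow (min_le_right _ _) hq'0.le) _
      _ = (n : ℝ≥0∞) ^ q' * ∫⁻ z, b z ∂Λ := lintegral_const_mul _ hbmeas
      _ = (n : ℝ≥0∞) ^ q' := by
            rw [Measure.lintegral_rnDeriv hNΛ, measure_univ, mul_one]
    rcases eq_or_ne S 0 with hS0 | hS0
    · rw [hS0]; exact zero_le
    have hSa : S ≤ ∫⁻ z, hn z * a z ∂Λ := by
      rw [hSdef]
      refine lintegral_mono_ae ?_
      filter_upwards [Measure.rnDeriv_lt_top N Λ] with z hbz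
      exact pt_claim1 hq hbz.ne n
    have hSp : S ^ (q'⁻¹) ≠ 0 := by simp [ENNReal.rpow_eq_zero_iff, hS0, hSfin]
    have hSpt : S ^ (q'⁻¹) ≠ ⊤ := by simp [ENNReal.rpow_eq_top_iff, hS0, hSfin]
    set g : α → ℝ≥0∞ := fun z => hn z * (S ^ (q'⁻¹))⁻¹ with hgdef
    have hgmeas : Measurable g := hnmeas.mul_const _
    have hgint : ∫⁻ z, g z ^ q' ∂N ≤ 1 := by
      have h1 : ∫⁻ z, g z ^ q' ∂N = ∫⁻ z, b z * g z ^ q' ∂Λ :=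
        (MeasureTheory.lintegral_rnDeriv_mul hNΛ (hgmeas.pow_const q').aemeasurable).symm
      have h2 : ∀ z, g z ^ q' = hn z ^ q' * ((S ^ (q'⁻¹))⁻¹) ^ q' := fun z =>
        ENNReal.mul_rpow_of_nonneg _ _ hq'0.le
      have h3 : ((S ^ (q'⁻¹))⁻¹) ^ q' = S⁻¹ := by
        rw [ENNReal.inv_rpow, ENNReal.rpow_inv_rpow hq'0.ne']
      rw [h1]
      calc ∫⁻ z, b z * g z ^ q' ∂Λ = ∫⁻ z, (hn z ^ q' * b z) * S⁻¹ ∂Λ := by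
            refine lintegral_congr fun z => ?_
            rw [h2 z, h3]
            ring
      _ = (∫⁻ z, hn z ^ q' * b z ∂Λ) * S⁻¹ :=
            lintegral_mul_const' _ _ (by simpa using hS0)
      _ = S * S⁻¹ := by rw [← hSdef]
      _ ≤ 1 := by
            rw [ENNReal.mul_inv_cancel hS0 hSfin]
    have hgM := hdual g hgmeas hgint
    have hgM' : ∫⁻ z, g z ∂M = (∫⁻ z, a z * hn z ∂Λ) * (S ^ (q'⁻¹))⁻¹ := by
      have h1 : ∫⁻ z, g z ∂M = ∫⁻ z, a z * g z ∂Λ :=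
        (MeasureTheory.lintegral_rnDeriv_mul hMΛ hgmeas.aemeasurable).symm
      rw [h1, hgdef]
      calc ∫⁻ z, a z * (hn z * (S ^ (q'⁻¹))⁻¹) ∂Λ
          = ∫⁻ z, (a z * hn z) * (S ^ (q'⁻¹))⁻¹ ∂Λ := by
            refine lintegral_congr fun z => ?_
            ring
      _ = (∫⁻ z, a z * hn z ∂Λ) * (S ^ (q'⁻¹))⁻¹ :=
            lintegral_mul_const' _ _ (by simpa using hSp)
    have hSS : S * (S ^ (q'⁻¹))⁻¹ ≤ T ^ q⁻¹ := by
      calc S * (S ^ (q'⁻¹))⁻¹ ≤ (∫⁻ z, hn z * a z ∂Λ) * (S ^ (q'⁻¹))⁻¹ :=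
            mul_le_mul_left hSa _
      _ = (∫⁻ z, a z * hn z ∂Λ) * (S ^ (q'⁻¹))⁻¹ := by
            congr 1
            exact lintegral_congr fun z => mul_comm _ _
      _ = ∫⁻ z, g z ∂M := hgM'.symm
      _ ≤ T ^ q⁻¹ := hgM
    have hSle : S ≤ T ^ q⁻¹ * S ^ (q'⁻¹) := by
      refine (ENNReal.div_le_iff_le_mul (Or.inl hSp) (Or.inl hSpt)).mp ?_
      rw [div_eq_mul_inv]
      exact hSS
    exact le_of_le_rpow_mul hq hSfin (by rw [← hqq']; exact hSle)
  · -- not absolutely continuous: T = ⊤, contradiction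
    exfalso
    apply hT
    have hex : ∃ s, N s = 0 ∧ M s ≠ 0 := by
      by_contra hc
      push_neg at hc
      exact hMN (Measure.AbsolutelyContinuous.mk fun s _ hs => hc s hs)
    obtain ⟨s, hNs, hMs⟩ := hex
    set t := toMeasurable N s with htdef
    have ht : MeasurableSet t := measurableSet_toMeasurable N s
    have hNt : N t = 0 := by rw [htdef, measure_toMeasurable]; exact hNs
    have hMt : M t ≠ 0 := fun h0 => hMs (measure_mono_null (subset_toMeasurable N s) h0)
    have haeP : ∀ᵐ y ∂ν, P y t = 0 := by
      have h1 : ∫⁻ y, P y t ∂ν = 0 := by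
        rw [← Measure.bind_apply ht P.measurable.aemeasurable]
        exact hNt
      exact (lintegral_eq_zero_iff (P.measurable_coe ht)).mp h1
    have hMt' : ∫⁻ y, ∫⁻ x, P x t ∂(κ y) ∂ν ≠ 0 := by
      have : M t = ∫⁻ y, ∫⁻ x, P x t ∂(κ y) ∂ν := by
        rw [hMdef, Measure.bind_apply ht P.measurable.aemeasurable,
          Measure.lintegral_bind κ.measurable.aemeasurable (P.measurable_coe ht).aemeasurable]
      rw [← this]
      exact hMt
    have hinner_meas : Measurable fun y => ∫⁻ x, P x t ∂(κ y) :=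
      Measurable.lintegral_kernel_prod_right ((P.measurable_coe ht).comp measurable_snd)
    set G := {y | ∫⁻ x, P x t ∂(κ y) ≠ 0} with hGdef
    have hGmeas : MeasurableSet G := (hinner_meas (measurableSet_singleton 0)).compl
    have hG : ν G ≠ 0 := by
      intro h0
      apply hMt'
      have hae0 : ∀ᵐ y ∂ν, ∫⁻ x, P x t ∂(κ y) = 0 := by
        rw [ae_iff]
        exact h0
      calc ∫⁻ y, ∫⁻ x, P x t ∂(κ y) ∂ν = ∫⁻ _, 0 ∂ν := lintegral_congr_ae hae0
      _ = 0 := lintegral_zero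
    refine top_le_iff.mp ?_
    calc (⊤ : ℝ≥0∞) = ∫⁻ y, G.indicator (fun _ => (⊤:ℝ≥0∞)) y ∂ν := by
          rw [lintegral_indicator hGmeas, setLIntegral_const]
          exact (ENNReal.top_mul hG).symm
    _ ≤ ∫⁻ y, (∫⁻ x, e x y ∂(κ y)) ^ q ∂ν := by
          refine lintegral_mono_ae ?_
          filter_upwards [haeP] with y hy
          by_cases hyG : y ∈ G
          · rw [Set.indicator_of_mem hyG]
            have hu : MeasurableSet {x | P x t ≠ 0} :=
              ((P.measurable_coe ht) (measurableSet_singleton 0)).compl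
            have hupos : κ y {x | P x t ≠ 0} ≠ 0 := by
              intro h0
              apply hyG
              have hae0 : ∀ᵐ x ∂(κ y), P x t = 0 := by
                rw [ae_iff]
                exact h0
              show ∫⁻ x, P x t ∂(κ y) = 0
              calc ∫⁻ x, P x t ∂(κ y) = ∫⁻ _, 0 ∂(κ y) := lintegral_congr_ae hae0
              _ = 0 := lintegral_zero
            have hE : ∫⁻ x, e x y ∂(κ y) = ⊤ := by
              refine top_le_iff.mp ?_
              calc (⊤:ℝ≥0∞) = ∫⁻ x, Set.indicator {x | P x t ≠ 0} (fun _ => (⊤:ℝ≥0∞)) x ∂(κ y) := by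
                    rw [lintegral_indicator hu, setLIntegral_const]
                    exact (ENNReal.top_mul hupos).symm
              _ ≤ ∫⁻ x, e x y ∂(κ y) := by
                    refine lintegral_mono fun x => ?_
                    by_cases hx : x ∈ {x | P x t ≠ 0}
                    · rw [Set.indicator_of_mem hx]
                      have hnac : ¬ P x ≪ P y := by
                        intro hac
                        exact hx (hac hy)
                      rw [he_top x y hnac]
                    · rw [Set.indicator_of_notMem hx]
                      exact zero_le
            rw [hE, ENNReal.top_rpow_of_pos hq0]
          · rw [Set.indicator_of_notMem hyG]
            exact zero_le

end Aux

/-- **First refined Rényi convexity bound** (Theorem 2.6, inequality (2.7) of the paper).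
The conditional distribution `γ_{1|2}` of the first coordinate given the second under a
coupling `γ` is formalized as any Markov kernel `κ` with `γ.map Prod.swap = ν ⊗ₘ κ`. -/
theorem refined_renyi_convexity_first {X : Type*} [MeasurableSpace X]
    [TopologicalSpace X] [PolishSpace X] [BorelSpace X]
    (q : ℝ) (hq : 1 < q)
    (P : Kernel X X) [IsMarkovKernel P]
    (ρ : X → X → ℝ≥0∞) (hρ : Measurable (Function.uncurry ρ))
    (hone : ∀ x y, renyiDiv q (P x) (P y) ≤ ρ x y)
    (μ ν : Measure X) [IsProbabilityMeasure μ] [IsProbabilityMeasure ν] :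
    renyiDiv q (μ.bind (fun x => P x)) (ν.bind (fun x => P x)) ≤
      ⨅ γ ∈ {γ : Measure (X × X) | IsCoupling γ μ ν},
        ⨅ κ : Kernel X X,
          ⨅ _ : IsMarkovKernel κ ∧ γ.map Prod.swap = ν ⊗ₘ κ,
            erealToENNReal ((((q - 1)⁻¹ : ℝ) : EReal) *
              ENNReal.log (∫⁻ y,
                (∫⁻ x, EReal.exp ((((q - 1) / q : ℝ) : EReal) * (ρ x y : EReal)) ∂(κ y)) ^ q
                  ∂ν)) := by
  refine le_iInf₂ fun γ hγ => le_iInf fun κ => le_iInf fun hcond => ?_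
  obtain ⟨hκM, hγκ⟩ := hcond
  haveI := hκM
  obtain ⟨hfst, hsnd⟩ := hγ
  have hμ : μ = ν.bind (fun y => κ y) := by
    rw [← hfst, ← Measure.snd_map_swap, hγκ, snd_compProd_eq_bind]
  have hcore := core_bound hq P ρ hρ hone ν κ
  rw [hμ, renyiDiv_def' hq.ne']
  refine erealToENNReal_mono ?_
  refine mul_le_mul_of_nonneg_left (ENNReal.log_monotone hcore) ?_
  exact_mod_cast inv_nonneg.mpr (by linarith : (0:ℝ) ≤ q - 1)


end SCR
end
end

section
/- Duality between power Harnack inequalities and Rényi reverse transport inequalities: Let P be a Markov kernel on a Polish space X, let p ∈ (1,∞) and q := p/(p−1), let x, y ∈ X, and let ρ ∈ [0,∞). Then R_q(δ_x P ∥ δ_y P) ≤ ρ if and only if for every bounded measurable f : X → [0,∞), Pf(x) ≤ exp( ((q−1)/q)·ρ ) · (P(f^p)(y))^{1/p}. -/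
open MeasureTheory ProbabilityTheory ENNReal Matrix

noncomputable section

namespace SCR

open scoped Classical

variable {Ω S T : Type*} [MeasurableSpace Ω] [MeasurableSpace S] [MeasurableSpace T]

lemma erealToENNReal_le_ofReal {x : EReal} {r : ℝ} (hr : 0 ≤ r) :
    erealToENNReal x ≤ ENNReal.ofReal r ↔ x ≤ (r : EReal) := by
  induction x using EReal.rec with
  | bot => simpa [erealToENNReal] using bot_le
  | coe y =>
      rw [erealToENNReal, if_neg (by simp), EReal.toReal_coe,
        ENNReal.ofReal_le_ofReal_iff hr, EReal.coe_le_coe_iff]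
  | top =>
      rw [erealToENNReal, if_pos rfl]
      simp [top_le_iff]

lemma renyiDiv_le_iff {μ ν : Measure Ω} {q ρ : ℝ} (hq : 1 < q) (hρ : 0 ≤ ρ) :
    renyiDiv q μ ν ≤ ENNReal.ofReal ρ ↔
      ∫⁻ z, (μ.rnDeriv (μ + ν) z) ^ q * (ν.rnDeriv (μ + ν) z) ^ (1 - q) ∂(μ + ν)
        ≤ ENNReal.ofReal (Real.exp ((q - 1) * ρ)) := by
  set I := ∫⁻ z, (μ.rnDeriv (μ + ν) z) ^ q * (ν.rnDeriv (μ + ν) z) ^ (1 - q) ∂(μ + ν) with hI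
  have hq1 : q ≠ 1 := hq.ne'
  have hc : (0 : ℝ) < (q - 1)⁻¹ := inv_pos.2 (by linarith)
  rw [renyiDiv, if_neg hq1, erealToENNReal_le_ofReal hρ]
  rcases eq_or_ne I 0 with h0 | h0
  · rw [← hI, h0]
    simp only [ENNReal.log_zero, EReal.coe_mul_bot_of_pos hc]
    simp
  rcases eq_or_ne I ⊤ with htop | htop
  · rw [← hI, htop]
    simp only [ENNReal.log_top, EReal.coe_mul_top_of_pos hc]
    simp [top_le_iff]
  · rw [← hI, ENNReal.log_pos_real h0 htop, ← EReal.coe_mul, EReal.coe_le_coe_iff,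
      ENNReal.le_ofReal_iff_toReal_le htop (Real.exp_pos _).le]
    have hIpos : 0 < I.toReal := ENNReal.toReal_pos h0 htop
    rw [← Real.log_le_iff_le_exp hIpos]
    constructor
    · intro h
      calc Real.log I.toReal = (q - 1) * ((q - 1)⁻¹ * Real.log I.toReal) := by
            rw [← mul_assoc, mul_inv_cancel₀ (by linarith : q - 1 ≠ 0), one_mul]
        _ ≤ (q - 1) * ρ := by
            apply mul_le_mul_of_nonneg_left h (by linarith)
    · intro h
      calc (q - 1)⁻¹ * Real.log I.toReal ≤ (q - 1)⁻¹ * ((q - 1) * ρ) :=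
            mul_le_mul_of_nonneg_left h hc.le
        _ = ρ := by
            have hne : q - 1 ≠ 0 := by linarith
            rw [← mul_assoc, inv_mul_cancel₀ hne, one_mul]


lemma harnack_of_lintegral_le {μ ν : Measure Ω} [IsProbabilityMeasure μ] [IsProbabilityMeasure ν]
    {p q ρ : ℝ} (hpq : p.HolderConjugate q) (hρ : 0 ≤ ρ)
    (hI : ∫⁻ z, (μ.rnDeriv (μ + ν) z) ^ q * (ν.rnDeriv (μ + ν) z) ^ (1 - q) ∂(μ + ν)
        ≤ ENNReal.ofReal (Real.exp ((q - 1) * ρ)))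
    {f : Ω → ℝ} (hf : Measurable f) (h0 : ∀ z, 0 ≤ f z) {M : ℝ} (hM : ∀ z, f z ≤ M) :
    ∫ z, f z ∂μ ≤ Real.exp ((q - 1) / q * ρ) * (∫ z, f z ^ p ∂ν) ^ (1 / p) := by
  have hq1 : 1 < q := hpq.symm.lt
  set lam := μ + ν with hlam
  set u := μ.rnDeriv lam with hu
  set g := ν.rnDeriv lam with hg
  have hmu : Measurable u := Measure.measurable_rnDeriv _ _
  have hmg : Measurable g := Measure.measurable_rnDeriv _ _
  have hac : μ ≪ lam := Measure.absolutelyContinuous_of_le (Measure.le_add_right le_rfl)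
  have hacν : ν ≪ lam := Measure.absolutelyContinuous_of_le (Measure.le_add_left le_rfl)
  set F := fun z => ENNReal.ofReal (f z) with hFdef
  have hmF : Measurable F := hf.ennreal_ofReal
  set I := ∫⁻ z, u z ^ q * g z ^ (1 - q) ∂lam with hIdef
  have hmI : Measurable fun z => u z ^ q * g z ^ (1 - q) :=
    (hmu.pow_const _).mul (hmg.pow_const _)
  have hItop : I ≠ ⊤ := (hI.trans_lt ENNReal.ofReal_lt_top).ne
  have haetop : ∀ᵐ z ∂lam, u z ^ q * g z ^ (1 - q) < ⊤ := ae_lt_top hmI hItop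
  -- split identity
  have hsplit : ∀ᵐ z ∂lam,
      u z * F z = (F z * g z ^ (1 / p)) * (u z * g z ^ (-(1 / p))) := by
    filter_upwards [haetop, Measure.rnDeriv_lt_top ν lam] with z h1 h2
    rcases eq_or_ne (g z) 0 with hg0 | hg0
    · have hu0 : u z = 0 := by
        by_contra hzu
        rw [hg0, ENNReal.zero_rpow_of_neg (by linarith), ENNReal.mul_top
          (by simp [ENNReal.rpow_eq_zero_iff, hzu, not_lt.2 (by positivity : (0:ℝ) ≤ q)])] at h1
        exact absurd h1 (lt_irrefl _)
      simp [hu0]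
    · have hgg : g z ^ (1 / p) * g z ^ (-(1 / p)) = 1 := by
        rw [← ENNReal.rpow_add _ _ hg0 h2.ne]
        simp
      calc u z * F z = (F z * u z) * (g z ^ (1 / p) * g z ^ (-(1 / p))) := by
            rw [hgg, mul_one, mul_comm]
        _ = (F z * g z ^ (1 / p)) * (u z * g z ^ (-(1 / p))) := by ring
  -- Hölder
  have hmA : Measurable fun z => F z * g z ^ (1 / p) := hmF.mul (hmg.pow_const _)
  have hmB : Measurable fun z => u z * g z ^ (-(1 / p)) := hmu.mul (hmg.pow_const _)
  have hHolder := ENNReal.lintegral_mul_le_Lp_mul_Lq lam hpq hmA.aemeasurable hmB.aemeasurable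
  -- compute the two factors
  have hA : ∫⁻ z, (F z * g z ^ (1 / p)) ^ p ∂lam = ∫⁻ z, F z ^ p ∂ν := by
    have : ∀ z, (F z * g z ^ (1 / p)) ^ p = g z * F z ^ p := by
      intro z
      rw [ENNReal.mul_rpow_of_nonneg _ _ hpq.nonneg, ← ENNReal.rpow_mul,
        one_div, inv_mul_cancel₀ hpq.ne_zero, ENNReal.rpow_one, mul_comm]
    rw [lintegral_congr fun z => this z]
    exact lintegral_rnDeriv_mul hacν ((hmF.pow_const _).aemeasurable)
  have hB : ∫⁻ z, (u z * g z ^ (-(1 / p))) ^ q ∂lam = I := by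
    have harith : -(1 / p) * q = 1 - q := by
      have h1 : (q - 1) * p = q := hpq.symm.sub_one_mul_conj
      have hp0 : p ≠ 0 := hpq.ne_zero
      field_simp
      linarith
    refine lintegral_congr fun z => ?_
    rw [ENNReal.mul_rpow_of_nonneg _ _ hpq.symm.nonneg, ← ENNReal.rpow_mul, harith]
  rw [hA, hB] at hHolder
  -- conclude
  have key : ∫⁻ z, F z ∂μ ≤
      (∫⁻ z, F z ^ p ∂ν) ^ (1 / p) * (ENNReal.ofReal (Real.exp ((q - 1) * ρ))) ^ (1 / q) := by
    calc ∫⁻ z, F z ∂μ = ∫⁻ z, u z * F z ∂lam :=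
          (lintegral_rnDeriv_mul hac hmF.aemeasurable).symm
      _ = ∫⁻ z, (fun w => F w * g w ^ (1 / p)) z * (fun w => u w * g w ^ (-(1 / p))) z ∂lam :=
          lintegral_congr_ae hsplit
      _ ≤ (∫⁻ z, F z ^ p ∂ν) ^ (1 / p) * I ^ (1 / q) := hHolder
      _ ≤ _ := by gcongr
  -- finiteness
  have hNtop : ∫⁻ z, F z ^ p ∂ν ≠ ⊤ := by
    have : ∫⁻ z, F z ^ p ∂ν ≤ ENNReal.ofReal M ^ p * 1 := by
      rw [← measure_univ (μ := ν), ← lintegral_const]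
      exact lintegral_mono fun z => ENNReal.rpow_le_rpow (ENNReal.ofReal_le_ofReal (hM z))
        hpq.nonneg
    exact (this.trans_lt (by
      rw [mul_one]
      exact ENNReal.rpow_lt_top_of_nonneg hpq.nonneg ENNReal.ofReal_ne_top)).ne
  have hint1 : ∫ z, f z ∂μ = (∫⁻ z, F z ∂μ).toReal := by
    rw [integral_eq_lintegral_of_nonneg_ae (ae_of_all _ h0) hf.aestronglyMeasurable]
  have hint2 : ∫ z, f z ^ p ∂ν = (∫⁻ z, F z ^ p ∂ν).toReal := by
    rw [integral_eq_lintegral_of_nonneg_ae (ae_of_all _ fun z => Real.rpow_nonneg (h0 z) p)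
      (hf.pow_const p).aestronglyMeasurable]
    congr 1
    exact lintegral_congr fun z => by
      rw [ENNReal.ofReal_rpow_of_nonneg (h0 z) hpq.nonneg]
  rw [hint1, hint2]
  have hRtop : (∫⁻ z, F z ^ p ∂ν) ^ (1 / p) * (ENNReal.ofReal (Real.exp ((q - 1) * ρ))) ^ (1 / q)
      ≠ ⊤ := ENNReal.mul_ne_top (ENNReal.rpow_ne_top_of_nonneg hpq.one_div_nonneg hNtop)
      (ENNReal.rpow_ne_top_of_nonneg hpq.symm.one_div_nonneg ENNReal.ofReal_ne_top)
  calc (∫⁻ z, F z ∂μ).toReal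
      ≤ ((∫⁻ z, F z ^ p ∂ν) ^ (1 / p) *
          (ENNReal.ofReal (Real.exp ((q - 1) * ρ))) ^ (1 / q)).toReal :=
        ENNReal.toReal_mono hRtop key
    _ = (∫⁻ z, F z ^ p ∂ν).toReal ^ (1 / p) *
          (Real.exp ((q - 1) * ρ)) ^ (1 / q) := by
        rw [ENNReal.toReal_mul, ← ENNReal.toReal_rpow, ← ENNReal.toReal_rpow,
          ENNReal.toReal_ofReal (Real.exp_pos _).le]
    _ = Real.exp ((q - 1) / q * ρ) * (∫⁻ z, F z ^ p ∂ν).toReal ^ (1 / p) := by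
        rw [mul_comm]
        congr 1
        rw [← Real.exp_mul]
        congr 1
        ring


lemma iSup_min_natCast (a : ℝ≥0∞) : ⨆ n : ℕ, min a (n : ℝ≥0∞) = a := by
  refine le_antisymm (iSup_le fun n => min_le_left _ _) ?_
  rcases eq_or_ne a ⊤ with rfl | ha
  · calc (⊤ : ℝ≥0∞) = ⨆ n : ℕ, (n : ℝ≥0∞) := ENNReal.iSup_natCast.symm
      _ ≤ ⨆ n : ℕ, min ⊤ (n : ℝ≥0∞) := by simp
  · obtain ⟨n, hn⟩ := ENNReal.exists_nat_gt ha
    exact le_iSup_of_le n (le_min le_rfl hn.le)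

lemma lintegral_le_of_harnack {μ ν : Measure Ω} [IsProbabilityMeasure μ] [IsProbabilityMeasure ν]
    {p q ρ : ℝ} (hpq : p.HolderConjugate q) (hρ : 0 ≤ ρ)
    (H : ∀ f : Ω → ℝ, Measurable f → (∀ z, 0 ≤ f z) → (∃ M, ∀ z, f z ≤ M) →
      ∫ z, f z ∂μ ≤ Real.exp ((q - 1) / q * ρ) * (∫ z, f z ^ p ∂ν) ^ (1 / p)) :
    ∫⁻ z, (μ.rnDeriv (μ + ν) z) ^ q * (ν.rnDeriv (μ + ν) z) ^ (1 - q) ∂(μ + ν)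
      ≤ ENNReal.ofReal (Real.exp ((q - 1) * ρ)) := by
  have hq1 : 1 < q := hpq.symm.lt
  have hp1 : 1 < p := hpq.lt
  set lam := μ + ν with hlam
  set u := μ.rnDeriv lam with hu
  set g := ν.rnDeriv lam with hg
  have hmu : Measurable u := Measure.measurable_rnDeriv _ _
  have hmg : Measurable g := Measure.measurable_rnDeriv _ _
  have hac : μ ≪ lam := Measure.absolutelyContinuous_of_le (Measure.le_add_right le_rfl)
  have hacν : ν ≪ lam := Measure.absolutelyContinuous_of_le (Measure.le_add_left le_rfl)
  set h : Ω → ℝ≥0∞ := fun z => u z ^ (q - 1) * g z ^ (1 - q) with hhdef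
  have hmh : Measurable h := (hmu.pow_const _).mul (hmg.pow_const _)
  set c : ℝ≥0∞ := ENNReal.ofReal (Real.exp ((q - 1) / q * ρ)) with hcdef
  set A : ℕ → ℝ≥0∞ := fun n => ∫⁻ z, min (h z) n * u z ∂lam with hAdef
  set B : ℕ → ℝ≥0∞ := fun n => ∫⁻ z, (min (h z) n) ^ p ∂ν with hBdef
  -- arithmetic facts
  have hqp : (q - 1) * p = q := hpq.symm.sub_one_mul_conj
  have harith1 : (q - 1) * (p - 1) = 1 := by nlinarith [hpq.mul_eq_add]
  have harith2 : (1 - q) * (p - 1) = -1 := by nlinarith [hpq.mul_eq_add]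
  -- Step 1: each A n is at most c ^ q
  have hAle : ∀ n : ℕ, A n ≤ c ^ q := by
    intro n
    have hAfin : A n ≠ ⊤ := by
      have : A n ≤ (n : ℝ≥0∞) * μ Set.univ := by
        rw [hAdef]
        calc ∫⁻ z, min (h z) n * u z ∂lam ≤ ∫⁻ z, (n : ℝ≥0∞) * u z ∂lam :=
              lintegral_mono fun z => mul_le_mul_left (min_le_right _ _) _
          _ = (n : ℝ≥0∞) * ∫⁻ z, u z ∂lam := lintegral_const_mul _ hmu
          _ = (n : ℝ≥0∞) * μ Set.univ := by
              rw [Measure.lintegral_rnDeriv hac]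
      exact (this.trans_lt (by simp [measure_univ, ENNReal.natCast_lt_top])).ne
    have hBA : B n ≤ A n := by
      show (∫⁻ z, (min (h z) (n : ℝ≥0∞)) ^ p ∂ν) ≤ ∫⁻ z, min (h z) (n : ℝ≥0∞) * u z ∂lam
      have heq : ∫⁻ z, (min (h z) (n : ℝ≥0∞)) ^ p ∂ν
          = ∫⁻ z, g z * ((min (h z) (n : ℝ≥0∞)) ^ p) ∂lam :=
        (lintegral_rnDeriv_mul hacν (((hmh.min measurable_const).pow_const _).aemeasurable)).symm
      rw [heq]
      refine lintegral_mono_ae ?_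
      filter_upwards [Measure.rnDeriv_lt_top μ lam, Measure.rnDeriv_lt_top ν lam] with z hut hgt
      rcases eq_or_ne (g z) 0 with hg0 | hg0
      · simp [hg0]
      · have hhfin : h z ≠ ⊤ := by
          rw [hhdef]
          refine ENNReal.mul_ne_top (ENNReal.rpow_ne_top_of_nonneg (by linarith) hut.ne) ?_
          rw [show (1 - q) = -(q - 1) by ring, ENNReal.rpow_neg]
          simp only [ne_eq, ENNReal.inv_eq_top]
          simp [ENNReal.rpow_eq_zero_iff, hg0, hgt.ne, hq1.le]
        have hkey : h z ^ (p - 1) * g z = u z := by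
          rw [hhdef]
          rw [ENNReal.mul_rpow_of_nonneg _ _ (by linarith : (0:ℝ) ≤ p - 1),
            ← ENNReal.rpow_mul, ← ENNReal.rpow_mul, harith1, harith2, ENNReal.rpow_one]
          calc u z * g z ^ (-1 : ℝ) * g z = u z * (g z ^ (-1 : ℝ) * g z ^ (1 : ℝ)) := by
                rw [ENNReal.rpow_one]; ring
            _ = u z := by
                rw [← ENNReal.rpow_add _ _ hg0 hgt.ne]
                norm_num
        calc g z * (min (h z) n) ^ p
            = g z * ((min (h z) n) ^ (p - 1) * (min (h z) n) ^ (1 : ℝ)) := by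
              rw [← ENNReal.rpow_add_of_nonneg _ _ (by linarith : (0:ℝ) ≤ p - 1) zero_le_one]
              norm_num
          _ ≤ g z * (h z ^ (p - 1) * (min (h z) n) ^ (1 : ℝ)) :=
              mul_le_mul_right (mul_le_mul_left
                (ENNReal.rpow_le_rpow (min_le_left _ _) (by linarith : (0:ℝ) ≤ p - 1)) _) _
          _ = (h z ^ (p - 1) * g z) * min (h z) n := by
              rw [ENNReal.rpow_one]; ring
          _ = min (h z) n * u z := by rw [hkey, mul_comm]
    have hBfin : B n ≠ ⊤ := (hBA.trans_lt hAfin.lt_top).ne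
    -- apply the Harnack hypothesis to the truncated function
    set φ : Ω → ℝ := fun z => (min (h z) n).toReal with hφdef
    have hφm : Measurable φ := (hmh.min measurable_const).ennreal_toReal
    have hφ0 : ∀ z, 0 ≤ φ z := fun z => ENNReal.toReal_nonneg
    have hminfin : ∀ z, min (h z) (n : ℝ≥0∞) ≠ ⊤ :=
      fun z => ne_top_of_le_ne_top (ENNReal.natCast_ne_top n) (min_le_right _ _)
    have hφM : ∃ M, ∀ z, φ z ≤ M := by
      refine ⟨n, fun z => ?_⟩
      rw [hφdef]
      calc (min (h z) n).toReal ≤ ((n : ℝ≥0∞)).toReal :=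
            ENNReal.toReal_mono (ENNReal.natCast_ne_top n) (min_le_right _ _)
        _ = n := by simp
    have hHa := H φ hφm hφ0 hφM
    have hint1 : ∫ z, φ z ∂μ = (A n).toReal := by
      rw [integral_eq_lintegral_of_nonneg_ae (ae_of_all _ hφ0) hφm.aestronglyMeasurable]
      congr 1
      calc ∫⁻ z, ENNReal.ofReal (φ z) ∂μ = ∫⁻ z, min (h z) n ∂μ :=
            lintegral_congr fun z => ENNReal.ofReal_toReal (hminfin z)
        _ = ∫⁻ z, u z * min (h z) n ∂lam :=
            (lintegral_rnDeriv_mul hac ((hmh.min measurable_const).aemeasurable)).symm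
        _ = A n := lintegral_congr fun z => mul_comm _ _
    have hint2 : ∫ z, φ z ^ p ∂ν = (B n).toReal := by
      rw [integral_eq_lintegral_of_nonneg_ae (ae_of_all _ fun z => Real.rpow_nonneg (hφ0 z) p)
        (hφm.pow_const p).aestronglyMeasurable]
      congr 1
      refine lintegral_congr fun z => ?_
      conv_rhs => rw [← ENNReal.ofReal_toReal (hminfin z)]
      rw [ENNReal.ofReal_rpow_of_nonneg (hφ0 z) hpq.nonneg]
    rw [hint1, hint2] at hHa
    -- back to ℝ≥0∞
    have hAc : A n ≤ c * B n ^ (1 / p) := by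
      have h1 : A n ≤ ENNReal.ofReal (Real.exp ((q - 1) / q * ρ) * (B n).toReal ^ (1 / p)) :=
        (ENNReal.le_ofReal_iff_toReal_le hAfin
          (mul_nonneg (Real.exp_pos _).le (Real.rpow_nonneg ENNReal.toReal_nonneg _))).2 hHa
      refine h1.trans_eq ?_
      rw [ENNReal.ofReal_mul (Real.exp_pos _).le,
        ← ENNReal.ofReal_rpow_of_nonneg ENNReal.toReal_nonneg hpq.one_div_nonneg,
        ENNReal.ofReal_toReal hBfin]
    have hAc2 : A n ≤ c * A n ^ (1 / p) := by
      refine hAc.trans ?_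
      gcongr
    rcases eq_or_ne (A n) 0 with hA0 | hA0
    · simp [hA0]
    · have hsplitpow : A n ^ (1 / p) * A n ^ (1 / q) = A n := by
        rw [← ENNReal.rpow_add _ _ hA0 hAfin, one_div, one_div, hpq.inv_add_inv_eq_one,
          ENNReal.rpow_one]
      have hpowfin : A n ^ (1 / p) ≠ ⊤ := ENNReal.rpow_ne_top_of_nonneg hpq.one_div_nonneg hAfin
      have hpow0 : A n ^ (1 / p) ≠ 0 := by
        simp [ENNReal.rpow_eq_zero_iff, hA0, hAfin]
      have hq' : A n ^ (1 / q) ≤ c := by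
        have h2 : A n ^ (1 / p) * A n ^ (1 / q) ≤ A n ^ (1 / p) * c := by
          rw [hsplitpow]
          calc A n ≤ c * A n ^ (1 / p) := hAc2
            _ = A n ^ (1 / p) * c := mul_comm _ _
        exact (ENNReal.mul_le_mul_iff_right hpow0 hpowfin).1 h2
      calc A n = (A n ^ (1 / q)) ^ q := by
            rw [← ENNReal.rpow_mul, one_div, inv_mul_cancel₀ hpq.symm.ne_zero,
              ENNReal.rpow_one]
        _ ≤ c ^ q := ENNReal.rpow_le_rpow hq' hpq.symm.nonneg
  -- Step 2: pass to the limit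
  have hcq : c ^ q = ENNReal.ofReal (Real.exp ((q - 1) * ρ)) := by
    rw [hcdef, ENNReal.ofReal_rpow_of_pos (Real.exp_pos _), ← Real.exp_mul]
    congr 2
    field_simp
  have hpoint : ∀ᵐ z ∂lam, u z ^ q * g z ^ (1 - q) = ⨆ n : ℕ, min (h z) n * u z := by
    filter_upwards [Measure.rnDeriv_lt_top μ lam] with z hut
    rw [← ENNReal.iSup_mul, iSup_min_natCast]
    simp only [hhdef]
    rcases eq_or_ne (u z) 0 with hu0 | hu0
    · simp [hu0, ENNReal.zero_rpow_of_pos (by linarith : (0:ℝ) < q),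
        ENNReal.zero_rpow_of_pos (by linarith : (0:ℝ) < q - 1)]
    · have hsplit : u z ^ q = u z ^ (q - 1) * u z := by
        nth_rewrite 3 [← ENNReal.rpow_one (u z)]
        rw [← ENNReal.rpow_add _ _ hu0 hut.ne]
        norm_num
      rw [hsplit]
      ring
  rw [lintegral_congr_ae hpoint, ← hcq]
  have hmono : Monotone fun (n : ℕ) (z : Ω) => min (h z) (n : ℝ≥0∞) * u z := by
    intro m n hmn z
    exact mul_le_mul_left (min_le_min le_rfl (by exact_mod_cast Nat.cast_le.2 hmn)) _
  rw [lintegral_iSup (f := fun (n : ℕ) (z : Ω) => min (h z) (n : ℝ≥0∞) * u z) (fun n => (hmh.min measurable_const).mul hmu) hmono]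
  exact iSup_le hAle


/-- **Duality between power Harnack inequalities and Rényi reverse transport
inequalities** (§5.2 of the paper). -/
theorem power_harnack_duality {X : Type*} [MeasurableSpace X]
    [TopologicalSpace X] [PolishSpace X] [BorelSpace X]
    (P : Kernel X X) [IsMarkovKernel P]
    (p : ℝ) (hp : 1 < p) (q : ℝ) (hq : q = p / (p - 1))
    (x y : X) (ρ : ℝ) (hρ : 0 ≤ ρ) :
    renyiDiv q (P x) (P y) ≤ ENNReal.ofReal ρ ↔
      ∀ f : X → ℝ, Measurable f → (∀ z, 0 ≤ f z) → (∃ M, ∀ z, f z ≤ M) →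
        ∫ z, f z ∂(P x) ≤
          Real.exp ((q - 1) / q * ρ) * (∫ z, f z ^ p ∂(P y)) ^ (1 / p) := by
  have hpq : p.HolderConjugate q := (Real.holderConjugate_iff_eq_conjExponent hp).2 hq
  rw [renyiDiv_le_iff hpq.symm.lt hρ]
  constructor
  · rintro hI f hf h0 ⟨M, hM⟩
    exact harnack_of_lintegral_le hpq hρ hI hf h0 hM
  · exact fun H => lintegral_le_of_harnack hpq hρ H

end SCR
end
end

section
/- Reverse Harnack duality lemma: Let q ∈ (0,1) and p := −q/(1−q) ∈ (−∞,0). Then for every measurable function f > 0 and all probability measures μ, ν on a common measurable space, E_μ[f] ≥ (E_ν[f^p])^{1/p} · exp( −(1/|p|)·R_q(μ∥ν) ), where (E_ν[f^p])^{1/p} is interpreted as 0 when E_ν[f^p] = +∞. -/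
open MeasureTheory ProbabilityTheory ENNReal Matrix

noncomputable section

namespace SCR

open scoped Classical

variable {Ω S T : Type*} [MeasurableSpace Ω] [MeasurableSpace S] [MeasurableSpace T]

/-- **Reverse Harnack duality lemma** (Lemma 5.6 of the paper).  The quantity
`(E_ν[f^p])^{1/p}` is interpreted as `0` when `E_ν[f^p] = ∞` (this is automatic here
since `⊤ ^ (1/p) = 0` in `ℝ≥0∞` for the negative exponent `1/p`). -/
theorem reverse_harnack_duality (q : ℝ) (hq0 : 0 < q) (hq1 : q < 1)
    (p : ℝ) (hp : p = -q / (1 - q))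
    (f : Ω → ℝ) (hf : Measurable f) (hfpos : ∀ x, 0 < f x)
    (μ ν : Measure Ω) [IsProbabilityMeasure μ] [IsProbabilityMeasure ν] :
    (∫⁻ x, ENNReal.ofReal (f x ^ p) ∂ν) ^ (1 / p) *
        EReal.exp (((-(1 / |p|) : ℝ) : EReal) * (renyiDiv q μ ν : EReal)) ≤
      ∫⁻ x, ENNReal.ofReal (f x) ∂μ := by
  have h1q : (0:ℝ) < 1 - q := by linarith
  have hpneg : p < 0 := by
    rw [hp]; exact div_neg_of_neg_of_pos (by linarith) h1q
  have hpne : p ≠ 0 := hpneg.ne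
  have hpq : q + p * (1 - q) = 0 := by rw [hp]; field_simp; ring
  have hpq' : p * (q - 1) = q := by rw [hp]; field_simp; ring
  have hinvp : 1 / p + (1 - q) / q = 0 := by
    rw [hp, one_div_div, div_neg, neg_add_cancel]
  have habs : -(1 / |p|) = 1 / p := by
    rw [abs_of_neg hpneg]; field_simp
  set g := μ.rnDeriv (μ + ν) with hgdef
  set h := ν.rnDeriv (μ + ν) with hhdef
  set Z := ∫⁻ x, g x ^ q * h x ^ (1 - q) ∂(μ + ν) with hZdef
  set A := ∫⁻ x, ENNReal.ofReal (f x ^ p) ∂ν with hAdef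
  set B := ∫⁻ x, ENNReal.ofReal (f x) ∂μ with hBdef
  have hmg : Measurable g := Measure.measurable_rnDeriv _ _
  have hmh : Measurable h := Measure.measurable_rnDeriv _ _
  have hmf : Measurable fun x => ENNReal.ofReal (f x) := hf.ennreal_ofReal
  have hmfp : Measurable fun x => ENNReal.ofReal (f x ^ p) :=
    (hf.pow measurable_const).ennreal_ofReal
  have hμac : μ ≪ μ + ν := by
    refine Measure.AbsolutelyContinuous.mk fun s hs h0 => ?_
    rw [Measure.add_apply] at h0
    exact (add_eq_zero.mp h0).1
  have hνac : ν ≪ μ + ν := by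
    refine Measure.AbsolutelyContinuous.mk fun s hs h0 => ?_
    rw [Measure.add_apply] at h0
    exact (add_eq_zero.mp h0).2
  have hA0 : A ≠ 0 := by
    intro h0
    rw [hAdef, lintegral_eq_zero_iff hmfp] at h0
    have h1 : ∀ᵐ x ∂ν, False := by
      filter_upwards [h0] with x hx
      have hfx : 0 < f x ^ p := Real.rpow_pos_of_pos (hfpos x) p
      simp only [Pi.zero_apply, ENNReal.ofReal_eq_zero] at hx
      exact absurd hx hfx.not_ge
    rw [Filter.eventually_false_iff_eq_bot, ae_eq_bot] at h1
    exact (IsProbabilityMeasure.ne_zero ν) h1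
  have hBq : ∫⁻ x, ENNReal.ofReal (f x) * g x ∂(μ + ν) = B := by
    rw [hBdef, ← MeasureTheory.lintegral_rnDeriv_mul hμac hmf.aemeasurable]
    exact lintegral_congr fun x => mul_comm _ _
  have hAq : ∫⁻ x, ENNReal.ofReal (f x ^ p) * h x ∂(μ + ν) = A := by
    rw [hAdef, ← MeasureTheory.lintegral_rnDeriv_mul hνac hmfp.aemeasurable]
    exact lintegral_congr fun x => mul_comm _ _
  have key : Z ≤ B ^ q * A ^ (1 - q) := by
    have hpt : ∀ x, g x ^ q * h x ^ (1 - q)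
        = (ENNReal.ofReal (f x) * g x) ^ q
          * (ENNReal.ofReal (f x ^ p) * h x) ^ (1 - q) := by
      intro x
      have ha0 : ENNReal.ofReal (f x) ≠ 0 := by
        simp [ENNReal.ofReal_eq_zero, (hfpos x).not_ge]
      have hat : ENNReal.ofReal (f x) ≠ ⊤ := ENNReal.ofReal_ne_top
      rw [ENNReal.mul_rpow_of_nonneg _ _ hq0.le,
        ← ENNReal.ofReal_rpow_of_pos (hfpos x),
        ENNReal.mul_rpow_of_nonneg _ _ h1q.le, ← ENNReal.rpow_mul,
        show (ENNReal.ofReal (f x)) ^ q * g x ^ q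
            * ((ENNReal.ofReal (f x)) ^ (p * (1 - q)) * h x ^ (1 - q))
          = ((ENNReal.ofReal (f x)) ^ q * (ENNReal.ofReal (f x)) ^ (p * (1 - q)))
            * (g x ^ q * h x ^ (1 - q)) by ring,
        ← ENNReal.rpow_add _ _ ha0 hat, hpq, ENNReal.rpow_zero, one_mul]
    calc Z = ∫⁻ x, (ENNReal.ofReal (f x) * g x) ^ q
          * (ENNReal.ofReal (f x ^ p) * h x) ^ (1 - q) ∂(μ + ν) := by
          rw [hZdef]; exact lintegral_congr hpt
      _ ≤ (∫⁻ x, ENNReal.ofReal (f x) * g x ∂(μ + ν)) ^ q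
          * (∫⁻ x, ENNReal.ofReal (f x ^ p) * h x ∂(μ + ν)) ^ (1 - q) :=
          ENNReal.lintegral_mul_norm_pow_le (hmf.mul hmg).aemeasurable
            (hmfp.mul hmh).aemeasurable hq0.le h1q.le (by ring)
      _ = B ^ q * A ^ (1 - q) := by rw [hBq, hAq]
  have hZ1 : Z ≤ 1 := by
    calc Z ≤ (∫⁻ x, g x ∂(μ + ν)) ^ q * (∫⁻ x, h x ∂(μ + ν)) ^ (1 - q) :=
        ENNReal.lintegral_mul_norm_pow_le hmg.aemeasurable hmh.aemeasurable
          hq0.le h1q.le (by ring)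
      _ ≤ (μ Set.univ) ^ q * (ν Set.univ) ^ (1 - q) :=
        mul_le_mul' (ENNReal.rpow_le_rpow (Measure.lintegral_rnDeriv_le) hq0.le)
          (ENNReal.rpow_le_rpow (Measure.lintegral_rnDeriv_le) h1q.le)
      _ = 1 := by simp
  by_cases hZ0 : Z = 0
  · have hren : renyiDiv q μ ν = ⊤ := by
      simp only [renyiDiv, if_neg hq1.ne, ← hgdef, ← hhdef, ← hZdef, hZ0, ENNReal.log_zero]
      rw [EReal.coe_mul_bot_of_neg (by simpa using inv_lt_zero.mpr (by linarith : q - 1 < 0))]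
      simp [erealToENNReal]
    rw [hren, EReal.coe_ennreal_top,
      EReal.coe_mul_top_of_neg (by
        have : (0:ℝ) < 1 / |p| := by positivity
        exact_mod_cast neg_neg_of_pos this),
      EReal.exp_bot, mul_zero]
    exact zero_le
  · have hZtop : Z ≠ ⊤ := (hZ1.trans_lt ENNReal.one_lt_top).ne
    set Zr := Z.toReal with hZrdef
    have hZrpos : 0 < Zr := ENNReal.toReal_pos hZ0 hZtop
    have hZr1 : Zr ≤ 1 := by
      rw [hZrdef, ← ENNReal.toReal_one]
      exact ENNReal.toReal_mono ENNReal.one_ne_top hZ1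
    have hlog : ENNReal.log Z = (Real.log Zr : EReal) := by
      rw [ENNReal.log, if_neg hZ0, if_neg hZtop]
    set r := (q - 1)⁻¹ * Real.log Zr with hrdef
    have hr0 : 0 ≤ r := by
      have h3 : (q - 1)⁻¹ ≤ 0 := (inv_lt_zero.mpr (by linarith : q - 1 < 0)).le
      have h4 : Real.log Zr ≤ 0 := Real.log_nonpos hZrpos.le hZr1
      rw [hrdef]; nlinarith
    have hren : renyiDiv q μ ν = ENNReal.ofReal r := by
      simp only [renyiDiv, if_neg hq1.ne, ← hgdef, ← hhdef, ← hZdef, hlog]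
      rw [← EReal.coe_mul, erealToENNReal, if_neg (EReal.coe_ne_top _), EReal.toReal_coe,
        hrdef]
    have hcoe : ((ENNReal.ofReal r : ℝ≥0∞) : EReal) = (r : EReal) := by
      rw [EReal.coe_ennreal_ofReal, max_eq_left hr0]
    have he : -(1 / |p|) * r = Real.log Zr * (1 / q) := by
      rw [habs, hrdef]
      have h2 : (1 / p) * (q - 1)⁻¹ = 1 / q := by
        rw [one_div, one_div, ← mul_inv, hpq']
      calc (1 / p) * ((q - 1)⁻¹ * Real.log Zr)
          = ((1 / p) * (q - 1)⁻¹) * Real.log Zr := by ring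
        _ = Real.log Zr * (1 / q) := by rw [h2]; ring
    have hexp : EReal.exp (((-(1 / |p|) : ℝ) : EReal) * ((renyiDiv q μ ν : ℝ≥0∞) : EReal))
        = Z ^ (1 / q) := by
      rw [hren, hcoe, ← EReal.coe_mul, EReal.exp_coe, he,
        ← Real.rpow_def_of_pos hZrpos, ← ENNReal.ofReal_rpow_of_pos hZrpos,
        ENNReal.ofReal_toReal hZtop]
    rw [hexp]
    by_cases hBtop : B = ⊤
    · rw [hBtop]; exact le_top
    by_cases hAtop : A = ⊤
    · rw [hAtop, ENNReal.top_rpow_of_neg (one_div_neg.mpr hpneg), zero_mul]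
      exact zero_le
    have h1 : Z ^ (1 / q) ≤ B * A ^ ((1 - q) / q) := by
      calc Z ^ (1 / q) ≤ (B ^ q * A ^ (1 - q)) ^ (1 / q) :=
          ENNReal.rpow_le_rpow key (by positivity)
        _ = B * A ^ ((1 - q) / q) := by
          rw [ENNReal.mul_rpow_of_nonneg _ _ (by positivity),
            ← ENNReal.rpow_mul, ← ENNReal.rpow_mul, mul_one_div, div_self hq0.ne',
            ENNReal.rpow_one, mul_one_div]
    calc A ^ (1 / p) * Z ^ (1 / q) ≤ A ^ (1 / p) * (B * A ^ ((1 - q) / q)) :=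
        mul_le_mul_right h1 _
      _ = B * (A ^ (1 / p) * A ^ ((1 - q) / q)) := by ring
      _ = B * A ^ (1 / p + (1 - q) / q) := by rw [ENNReal.rpow_add _ _ hA0 hAtop]
      _ = B := by rw [hinvp, ENNReal.rpow_zero, mul_one]


end SCR
end
end

section
/- Closed form for the optimal shifts: Let N ≥ 1 and L > 0 with L ≠ 1, and for k ≥ 0 define R_k := (L^{−2}−1)/(L^{−2(k+1)}−1). Consider the minimization of F(η) := Σ_{n=0}^{N−1} L^{2n} η_n² Π_{k=0}^{n−1} (1−η_k)² over all (η_0,…,η_{N−1}) ∈ [0,∞)^N with η_{N−1} = 1 (where the empty product equals 1). Then the unique optimal solution is η_i = R_{N−1−i} for all i ∈ {0,…,N−1}, and the optimal value is R_{N−1} = (L^{−2}−1)/(L^{−2N}−1). -/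
noncomputable section

namespace SCR

private def Sg (q : ℝ) (N : ℕ) : ℝ := ∑ j ∈ Finset.range N, (q⁻¹) ^ j

private def G (q : ℝ) (N : ℕ) (η : ℕ → ℝ) : ℝ :=
  ∑ n ∈ Finset.range N, q ^ n * η n ^ 2 * ∏ k ∈ Finset.range n, (1 - η k) ^ 2

private lemma Sg_pos {q : ℝ} (hq : 0 < q) {N : ℕ} (hN : 1 ≤ N) : 0 < Sg q N := by
  apply Finset.sum_pos
  · intro i _
    positivity
  · exact ⟨0, Finset.mem_range.mpr hN⟩

private lemma Sg_succ (q : ℝ) (N : ℕ) : Sg q (N + 1) = 1 + q⁻¹ * Sg q N := by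
  unfold Sg
  rw [Finset.sum_range_succ']
  rw [Finset.mul_sum]
  simp only [pow_zero]
  rw [add_comm]
  congr 1
  apply Finset.sum_congr rfl
  intro i _
  rw [pow_succ]
  ring

private lemma G_succ (q : ℝ) (N : ℕ) (η : ℕ → ℝ) :
    G q (N + 1) η = η 0 ^ 2 + (1 - η 0) ^ 2 * (q * G q N (fun i => η (i + 1))) := by
  unfold G
  rw [Finset.sum_range_succ']
  simp only [pow_zero, Finset.range_zero, Finset.prod_empty, mul_one, one_mul]
  rw [add_comm]
  congr 1
  rw [Finset.mul_sum, Finset.mul_sum]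
  apply Finset.sum_congr rfl
  intro n _
  rw [Finset.prod_range_succ']
  ring

end SCR

namespace SCR

private lemma sq_ineq {q s t : ℝ} (hq : 0 < q) (hs : 0 < s) :
    q / (q + s) ≤ t ^ 2 + (1 - t) ^ 2 * (q * s⁻¹) := by
  have h1 : 0 < q + s := by linarith
  have key : t ^ 2 + (1 - t) ^ 2 * (q * s⁻¹) - q / (q + s)
      = ((q + s) / s) * (t - q / (q + s)) ^ 2 := by
    field_simp
    ring
  nlinarith [mul_nonneg (le_of_lt (div_pos h1 hs)) (sq_nonneg (t - q / (q + s)))]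

private lemma sq_eq {q s t : ℝ} (hq : 0 < q) (hs : 0 < s)
    (h : t ^ 2 + (1 - t) ^ 2 * (q * s⁻¹) = q / (q + s)) : t = q / (q + s) := by
  have h1 : 0 < q + s := by linarith
  have key : t ^ 2 + (1 - t) ^ 2 * (q * s⁻¹) - q / (q + s)
      = ((q + s) / s) * (t - q / (q + s)) ^ 2 := by
    field_simp
    ring
  have h2 : ((q + s) / s) * (t - q / (q + s)) ^ 2 = 0 := by linarith [key, h]
  have h3 : (t - q / (q + s)) ^ 2 = 0 := by
    rcases mul_eq_zero.mp h2 with h | h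
    · exact absurd h (ne_of_gt (div_pos h1 hs))
    · exact h
  have := pow_eq_zero_iff (n := 2) (by norm_num) |>.mp h3
  linarith

private lemma Sg_succ_inv {q : ℝ} (hq : 0 < q) {N : ℕ} (hN : 1 ≤ N) :
    (Sg q (N + 1))⁻¹ = q / (q + Sg q N) := by
  have hs := Sg_pos hq hN
  rw [Sg_succ]
  rw [eq_div_iff (by linarith)]
  rw [inv_mul_eq_div, div_eq_iff (by positivity)]
  field_simp

private lemma key (q : ℝ) (hq : 0 < q) :
    ∀ N : ℕ, 1 ≤ N → ∀ η : ℕ → ℝ, (∀ i < N, 0 ≤ η i) → η (N - 1) = 1 →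
      (Sg q N)⁻¹ ≤ G q N η ∧
        (G q N η = (Sg q N)⁻¹ → ∀ i < N, η i = (Sg q (N - i))⁻¹) := by
  intro N
  induction N with
  | zero => omega
  | succ n ih =>
    intro _ η hpos hlast
    rcases Nat.eq_zero_or_pos n with rfl | hn
    · -- N = 1 : η 0 = 1
      have h0 : η 0 = 1 := hlast
      have hG : G q 1 η = 1 := by simp [G, h0]
      have hS : Sg q 1 = 1 := by simp [Sg]
      refine ⟨by rw [hG, hS]; norm_num, ?_⟩
      intro _ i hi
      interval_cases i
      simp [hS, h0]
    · -- N = n + 1, n ≥ 1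
      set η' : ℕ → ℝ := fun i => η (i + 1) with hη'
      have hpos' : ∀ i < n, 0 ≤ η' i := fun i hi => hpos (i + 1) (by omega)
      have hlast' : η' (n - 1) = 1 := by
        show η (n - 1 + 1) = 1
        have : n - 1 + 1 = n + 1 - 1 := by omega
        rw [this]; exact hlast
      obtain ⟨hIH1, hIH2⟩ := ih hn η' hpos' hlast'
      have hs := Sg_pos hq hn
      have hrec := G_succ q n η
      have hinv : (Sg q (n + 1))⁻¹ = q / (q + Sg q n) := Sg_succ_inv hq hn
      set t := η 0 with ht
      set A := G q n η' with hA
      have hAs : (Sg q n)⁻¹ ≤ A := hIH1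
      have hchain : t ^ 2 + (1 - t) ^ 2 * (q * (Sg q n)⁻¹) ≤ t ^ 2 + (1 - t) ^ 2 * (q * A) := by
        have h1 : 0 ≤ (1 - t) ^ 2 := sq_nonneg _
        have h2 : q * (Sg q n)⁻¹ ≤ q * A := mul_le_mul_of_nonneg_left hAs hq.le
        have h3 := mul_le_mul_of_nonneg_left h2 h1
        linarith
      have hlow := sq_ineq (t := t) hq hs
      constructor
      · rw [hrec, hinv]
        calc q / (q + Sg q n) ≤ t ^ 2 + (1 - t) ^ 2 * (q * (Sg q n)⁻¹) := hlow
          _ ≤ t ^ 2 + (1 - t) ^ 2 * (q * A) := hchain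
      · intro heq
        rw [hrec, hinv] at heq
        -- both inequalities are equalities
        have he1 : t ^ 2 + (1 - t) ^ 2 * (q * (Sg q n)⁻¹) = q / (q + Sg q n) := by
          linarith
        have ht0 : t = q / (q + Sg q n) := sq_eq hq hs he1
        have htlt : t < 1 := by
          rw [ht0, div_lt_one (by linarith)]
          linarith
        have hfac : 0 < (1 - t) ^ 2 := by
          have : 0 < 1 - t := by linarith
          positivity
        have hAeq : A = (Sg q n)⁻¹ := by
          by_contra hne
          have : (Sg q n)⁻¹ < A := lt_of_le_of_ne hAs (Ne.symm hne)
          have h2 : q * (Sg q n)⁻¹ < q * A := by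
            exact mul_lt_mul_of_pos_left this hq
          have h3 := mul_lt_mul_of_pos_left h2 hfac
          linarith
        have hun := hIH2 hAeq
        intro i hi
        match i with
        | 0 =>
          simp only [Nat.sub_zero]
          rw [hinv]; exact ht0
        | (j + 1) =>
          have hj : j < n := by omega
          have := hun j hj
          have hss : n + 1 - (j + 1) = n - j := by omega
          rw [hss]
          exact this

private lemma value (q : ℝ) (hq : 0 < q) :
    ∀ N : ℕ, 1 ≤ N → ∀ η : ℕ → ℝ, (∀ i < N, η i = (Sg q (N - i))⁻¹) →
      G q N η = (Sg q N)⁻¹ := by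
  intro N
  induction N with
  | zero => omega
  | succ n ih =>
    intro _ η hη
    rcases Nat.eq_zero_or_pos n with rfl | hn
    · have h0 : η 0 = 1 := by
        have := hη 0 (by norm_num)
        simpa [Sg] using this
      simp [G, h0, Sg]
    · have hs := Sg_pos hq hn
      have hrec := G_succ q n η
      have hinv : (Sg q (n + 1))⁻¹ = q / (q + Sg q n) := Sg_succ_inv hq hn
      have hη' : ∀ i < n, (fun i => η (i + 1)) i = (Sg q (n - i))⁻¹ := by
        intro i hi
        have := hη (i + 1) (by omega)
        simpa [show n + 1 - (i + 1) = n - i by omega] using this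
      have hA := ih hn _ hη'
      have h0 : η 0 = q / (q + Sg q n) := by
        have := hη 0 (by omega)
        simpa [hinv] using this
      rw [hrec, hA, h0, hinv]
      have h1 : 0 < q + Sg q n := by linarith
      field_simp
      ring

end SCR

namespace SCR

/-- **Closed form for the optimal shifts** (Lemma A.1 of the paper).  Here
`R k = (L⁻² - 1)/(L^{-2(k+1)} - 1)` and
`F η = ∑_{n<N} L^{2n} η_n² ∏_{k<n} (1 - η_k)²`; the minimization is over all
`η` with `η_i ≥ 0` for `i < N` and `η_{N-1} = 1`.  The unique optimal solution is
`η_i = R_{N-1-i}` and the optimal value is `R_{N-1} = (L⁻² - 1)/(L^{-2N} - 1)`. -/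
theorem optimal_shifts (N : ℕ) (hN : 1 ≤ N) (L : ℝ) (hL : 0 < L) (hL1 : L ≠ 1)
    (R : ℕ → ℝ) (hR : ∀ k, R k = ((L ^ 2)⁻¹ - 1) / ((L ^ (2 * (k + 1)))⁻¹ - 1))
    (F : (ℕ → ℝ) → ℝ)
    (hF : ∀ η : ℕ → ℝ, F η = ∑ n ∈ Finset.range N,
      L ^ (2 * n) * η n ^ 2 * ∏ k ∈ Finset.range n, (1 - η k) ^ 2)
    (ηstar : ℕ → ℝ) (hstar : ∀ i, ηstar i = R (N - 1 - i)) :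
    (∀ i < N, 0 ≤ ηstar i) ∧ ηstar (N - 1) = 1 ∧
      F ηstar = ((L ^ 2)⁻¹ - 1) / ((L ^ (2 * N))⁻¹ - 1) ∧
      (∀ η : ℕ → ℝ, (∀ i < N, 0 ≤ η i) → η (N - 1) = 1 → F ηstar ≤ F η) ∧
      (∀ η : ℕ → ℝ, (∀ i < N, 0 ≤ η i) → η (N - 1) = 1 → F η = F ηstar →
        ∀ i < N, η i = R (N - 1 - i)) := by
  have hq : (0 : ℝ) < L ^ 2 := by positivity
  have hq1 : L ^ 2 ≠ 1 := by
    intro h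
    have : (L - 1) * (L + 1) = 0 := by nlinarith
    rcases mul_eq_zero.mp this with h' | h'
    · exact hL1 (by linarith)
    · linarith
  have hqi1 : (L ^ 2)⁻¹ ≠ 1 := by
    intro h
    apply hq1
    have := congrArg Inv.inv h
    simpa using this
  have hSgeom : ∀ k : ℕ, Sg (L ^ 2) k = (((L ^ 2)⁻¹) ^ k - 1) / ((L ^ 2)⁻¹ - 1) :=
    fun k => geom_sum_eq hqi1 k
  have hpow : ∀ k : ℕ, ((L ^ 2)⁻¹) ^ k = (L ^ (2 * k))⁻¹ := by
    intro k
    rw [inv_pow, ← pow_mul]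
  have hRS : ∀ k, R k = (Sg (L ^ 2) (k + 1))⁻¹ := by
    intro k
    rw [hR, hSgeom, inv_div, hpow]
  have hFG : ∀ η, F η = G (L ^ 2) N η := by
    intro η
    rw [hF]
    apply Finset.sum_congr rfl
    intro n _
    rw [pow_mul]
  have hstar' : ∀ i < N, ηstar i = (Sg (L ^ 2) (N - i))⁻¹ := by
    intro i hi
    rw [hstar, hRS]
    congr 2
    omega
  have hval : F ηstar = (Sg (L ^ 2) N)⁻¹ := by
    rw [hFG]
    exact value (L ^ 2) hq N hN ηstar hstar'
  refine ⟨?_, ?_, ?_, ?_, ?_⟩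
  · intro i hi
    rw [hstar' i hi]
    have := Sg_pos hq (N := N - i) (by omega)
    positivity
  · have h := hstar' (N - 1) (by omega)
    rw [show N - (N - 1) = 1 by omega] at h
    rw [h]
    simp [Sg]
  · rw [hval, hSgeom, inv_div, hpow]
  · intro η hpos hlast
    rw [hval, hFG]
    exact (key (L ^ 2) hq N hN η hpos hlast).1
  · intro η hpos hlast heq i hi
    rw [hFG, hval] at heq
    have := (key (L ^ 2) hq N hN η hpos hlast).2 heq i hi
    rw [this, hRS]
    congr 2
    omega

end SCR
end
end
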